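/- arXiv:2305.13505 — 5 statements merged into one kernel-verified Lean document; each statement's English description precedes it below -/
import Mathlib

section
/- Let X and E be separable complete metric spaces, with X non-empty, and let D = {x₁,x₂,…} be a fixed enumeration of a countable dense subset of X. Then either X coarsely embeds into E, or the relation < is well-founded on Coa(D,E) and rk(Coa(D,E), <) is a countable ordinal. -/
open Filter Set Topology
open scoped ENNReal

noncomputable section

/-! ### Metric notions of embeddability -/

/-- A coarse embedding between (pseudo)metric spaces. -/
def CoarseEmbeddingMap {X E : Type*} [PseudoMetricSpace X] [PseudoMetricSpace E]
    (f : X → E) : Prop :=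
  ∃ κ ω : ℝ → ℝ,
    MonotoneOn κ (Set.Ici 0) ∧ MonotoneOn ω (Set.Ici 0) ∧
    (∀ t : ℝ, 0 ≤ t → 0 ≤ κ t ∧ 0 ≤ ω t) ∧
    Filter.Tendsto κ Filter.atTop Filter.atTop ∧
    ∀ x y : X, κ (dist x y) ≤ dist (f x) (f y) ∧ dist (f x) (f y) ≤ ω (dist x y)

/-- A uniform embedding between (pseudo)metric spaces. -/
def UniformEmbeddingMapNL {X E : Type*} [PseudoMetricSpace X] [PseudoMetricSpace E]
    (f : X → E) : Prop :=
  ∃ κ ω : ℝ → ℝ,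
    MonotoneOn κ (Set.Ici 0) ∧ MonotoneOn ω (Set.Ici 0) ∧
    (∀ t : ℝ, 0 ≤ t → 0 ≤ κ t ∧ 0 ≤ ω t) ∧
    (∀ t : ℝ, 0 < t → 0 < κ t) ∧
    Filter.Tendsto ω (nhdsWithin 0 (Set.Ioi 0)) (nhds 0) ∧
    ∀ x y : X, κ (dist x y) ≤ dist (f x) (f y) ∧ dist (f x) (f y) ≤ ω (dist x y)

/-- A bi-Lipschitz embedding between (pseudo)metric spaces. -/
def BiLipschitzEmbeddingMap {X E : Type*} [PseudoMetricSpace X] [PseudoMetricSpace E]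
    (f : X → E) : Prop :=
  ∃ c C : ℝ, 0 < c ∧ c ≤ C ∧
    ∀ x y : X, c * dist x y ≤ dist (f x) (f y) ∧ dist (f x) (f y) ≤ C * dist x y

/-! ### The set `𝒵`, functional moduli and the classes `M_coarse`, `M_uniform`, `M_Lipschitz` -/

/-- The set `𝒵 = {…,1/3,1/2,1,2,3,…} ⊆ (0,∞)`. -/
def Zset : Set ℝ := {r | ∃ n : ℕ, 1 ≤ n ∧ (r = n ∨ r = 1 / n)}

/-- Membership in `𝒩`: a non-decreasing `[0,∞]`-valued modulus on `𝒵` (values outside of `𝒵`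
are irrelevant dummy values). -/
def Nmod (κ : ℝ → ℝ≥0∞) : Prop := MonotoneOn κ Zset

/-- `t₋`: the largest element of `𝒵` below a real `t > 0`. -/
def tminus (t : ℝ) : ℝ := if 1 ≤ t then (⌊t⌋ : ℝ) else 1 / (⌈1 / t⌉ : ℝ)

/-- `t₊`: the smallest element of `𝒵` above a real `t > 0`. -/
def tplus (t : ℝ) : ℝ := if 1 ≤ t then (⌈t⌉ : ℝ) else 1 / (⌊1 / t⌋ : ℝ)

/-- The pair `(κ, ω)` belongs to `M_coarse`. -/
def Mcoarse (κ ω : ℝ → ℝ≥0∞) : Prop :=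
  (∀ r ∈ Zset, ω r < ⊤) ∧ Filter.Tendsto (fun n : ℕ => κ n) Filter.atTop (nhds ⊤)

/-- The pair `(κ, ω)` belongs to `M_uniform`. -/
def Muniform (κ ω : ℝ → ℝ≥0∞) : Prop :=
  (∀ r ∈ Zset, 0 < κ r) ∧
    Filter.Tendsto (fun n : ℕ => ω (1 / (n + 1 : ℝ))) Filter.atTop (nhds 0)

/-- The pair `(κ, ω)` belongs to `M_Lipschitz`. -/
def MLipschitz (κ ω : ℝ → ℝ≥0∞) : Prop :=
  ∃ c C : ℝ, 0 < c ∧ c < C ∧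
    ∀ r ∈ Zset, ENNReal.ofReal (c * r) ≤ κ r ∧ ω r ≤ ENNReal.ofReal (C * r)

/-! ### Ill-foundedness and ranks of binary relations restricted to subsets -/

/-- The relation `r` is ill-founded on the subset `S`. -/
def IllFoundedOn {A : Type*} (r : A → A → Prop) (S : Set A) : Prop :=
  ∃ a : ℕ → A, (∀ n, a n ∈ S) ∧ ∀ n, r (a (n + 1)) (a n)

/-- The rank `rk(S, r)` of a relation `r`, well-founded on a subset `S`. -/
def relRankOn {A : Type*} (r : A → A → Prop) (S : Set A)
    (h : WellFounded fun a b : S => r a b) : Ordinal :=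
  ⨆ a : S, Order.succ (h.apply a).rank

/-! ### The simple embeddability ranks -/

/-- A quadruple `(κ, ω, k, φ)` as in the definition of `Ω(D,E)`; the countable dense set `D` is
given by an enumeration `x : ℕ → X` and `φ : D → E` is represented by the map on indices. -/
structure Quad (E : Type*) where
  kappa : ℝ → ℝ≥0∞
  omega : ℝ → ℝ≥0∞
  k : ℕ
  phi : ℕ → E

/-- The set `Ω(D,E)` where `D` is enumerated by `x : ℕ → X`. -/
def OmegaSet {X E : Type*} [MetricSpace X] [MetricSpace E] (x : ℕ → X) : Set (Quad E) :=
  {q | Nmod q.kappa ∧ Nmod q.omega ∧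
    (∀ i j : ℕ, x i = x j → q.phi i = q.phi j) ∧
    ∀ i < q.k, ∀ j < q.k, x i ≠ x j →
      q.kappa (tminus (dist (x i) (x j))) ≤ edist (q.phi i) (q.phi j) ∧
      edist (q.phi i) (q.phi j) ≤ q.omega (tplus (dist (x i) (x j)))}

/-- The set `Coa(D,E)`. -/
def CoaSet {X E : Type*} [MetricSpace X] [MetricSpace E] (x : ℕ → X) : Set (Quad E) :=
  {q ∈ OmegaSet x | Mcoarse q.kappa q.omega}

/-- The set `Uni(D,E)`. -/
def UniSet {X E : Type*} [MetricSpace X] [MetricSpace E] (x : ℕ → X) : Set (Quad E) :=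
  {q ∈ OmegaSet x | Muniform q.kappa q.omega}

/-- The set `Lip(D,E)`. -/
def LipSet {X E : Type*} [MetricSpace X] [MetricSpace E] (x : ℕ → X) : Set (Quad E) :=
  {q ∈ OmegaSet x | MLipschitz q.kappa q.omega}

/-- The relation `<` on `Ω(D,E)`. -/
def QuadRel {E : Type*} (p q : Quad E) : Prop :=
  p.kappa = q.kappa ∧ p.omega = q.omega ∧ p.k = q.k + 1 ∧ ∀ i < q.k, p.phi i = q.phi i

/-! ### Embeddability ranks based on Schauder bases -/

/-- The copy of `ℤ` inside `ℝ`. -/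
def ZR : Set ℝ := Set.range ((↑) : ℤ → ℝ)

/-- The copy of `ℚ` inside `ℝ`. -/
def QR : Set ℝ := Set.range ((↑) : ℚ → ℝ)

/-- `R[A]`: the set of `R`-linear combinations of the vectors `e i`, `i ∈ A`. -/
def RComb {X : Type*} [NormedAddCommGroup X] [Module ℝ X] (R : Set ℝ) (e : ℕ → X)
    (A : Finset ℕ) : Set X :=
  {x | ∃ c : ℕ → ℝ, (∀ i, c i ∈ R) ∧ x = ∑ i ∈ A, c i • e i}

/-- `R[e₁,e₂,…]`: the set of all finite `R`-linear combinations of the vectors `e i`. -/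
def RCombAll {X : Type*} [NormedAddCommGroup X] [Module ℝ X] (R : Set ℝ) (e : ℕ → X) : Set X :=
  ⋃ A : Finset ℕ, RComb R e A

/-- `A ≺* B` for finite subsets of `ℕ`: `A` is obtained from `B` by adding one element larger
than all elements of `B`. -/
def PrecStar (A B : Finset ℕ) : Prop := ∃ m : ℕ, (∀ b ∈ B, b < m) ∧ A = insert m B

/-- A quadruple `(κ, ω, A, φ)` as in the definition of `Θ(R,(eₙ),E)`; the finite subset `A` of
`{e₁,e₂,…}` is recorded by the finite set of indices, and `φ` (a map on `R[e₁,e₂,…]`) is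
represented by a map on `X` (only its values on `R`-linear combinations are ever relevant). -/
structure QuadF (X E : Type*) where
  kappa : ℝ → ℝ≥0∞
  omega : ℝ → ℝ≥0∞
  A : Finset ℕ
  phi : X → E

/-- The set `Θ(R,(eₙ),E)`. -/
def ThetaSet {X E : Type*} [NormedAddCommGroup X] [Module ℝ X] [MetricSpace E]
    (R : Set ℝ) (e : ℕ → X) : Set (QuadF X E) :=
  {q | Nmod q.kappa ∧ Nmod q.omega ∧
    ∀ x ∈ RComb R e q.A, ∀ y ∈ RComb R e q.A, x ≠ y →
      q.kappa (tminus (dist x y)) ≤ edist (q.phi x) (q.phi y) ∧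
      edist (q.phi x) (q.phi y) ≤ q.omega (tplus (dist x y))}

/-- The set `Coa(R,(eₙ),E)`. -/
def CoaTheta {X E : Type*} [NormedAddCommGroup X] [Module ℝ X] [MetricSpace E]
    (R : Set ℝ) (e : ℕ → X) : Set (QuadF X E) :=
  {q ∈ ThetaSet R e | Mcoarse q.kappa q.omega}

/-- The set `Uni(R,(eₙ),E)`. -/
def UniTheta {X E : Type*} [NormedAddCommGroup X] [Module ℝ X] [MetricSpace E]
    (R : Set ℝ) (e : ℕ → X) : Set (QuadF X E) :=
  {q ∈ ThetaSet R e | Muniform q.kappa q.omega}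

/-- The set `Lip(R,(eₙ),E)`. -/
def LipTheta {X E : Type*} [NormedAddCommGroup X] [Module ℝ X] [MetricSpace E]
    (R : Set ℝ) (e : ℕ → X) : Set (QuadF X E) :=
  {q ∈ ThetaSet R e | MLipschitz q.kappa q.omega}

/-- The relation `<` on `Θ(R,(eₙ),E)`. -/
def QuadFRel {X E : Type*} [NormedAddCommGroup X] [Module ℝ X]
    (R : Set ℝ) (e : ℕ → X) (p q : QuadF X E) : Prop :=
  p.kappa = q.kappa ∧ p.omega = q.omega ∧ PrecStar p.A q.A ∧
    ∀ x ∈ RComb R e q.A, p.phi x = q.phi x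

/-! ### Schauder bases, basic sequences, subsymmetric bases -/

/-- `(eₙ)` is a Schauder basis of the subset `S`: every element of `S` has a unique
norm-convergent expansion. -/
def IsSchauderBasisOf {X : Type*} [NormedAddCommGroup X] [Module ℝ X] (e : ℕ → X)
    (S : Set X) : Prop :=
  ∀ x ∈ S, ∃! a : ℕ → ℝ,
    Filter.Tendsto (fun N => ∑ i ∈ Finset.range N, a i • e i) Filter.atTop (nhds x)

/-- `(eₙ)` is a Schauder basis of the whole space `X`. -/
def IsSchauderBasis {X : Type*} [NormedAddCommGroup X] [Module ℝ X] (e : ℕ → X) : Prop :=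
  IsSchauderBasisOf e Set.univ

/-- `(eₙ)` is a basic sequence: it is a Schauder basis of its closed linear span. -/
def IsBasicSequence {X : Type*} [NormedAddCommGroup X] [Module ℝ X] (e : ℕ → X) : Prop :=
  IsSchauderBasisOf e (closure (Submodule.span ℝ (Set.range e) : Set X))

/-- `(eₙ)` is a subsymmetric basic sequence. -/
def IsSubsymmetric {X : Type*} [NormedAddCommGroup X] [Module ℝ X] (e : ℕ → X) : Prop :=
  IsBasicSequence e ∧ ∃ C : ℝ, 1 ≤ C ∧ ∀ n : ℕ → ℕ, StrictMono n →
    ∀ s : Finset ℕ, ∀ a : ℕ → ℝ,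
      C⁻¹ * ‖∑ k ∈ s, a k • e k‖ ≤ ‖∑ k ∈ s, a k • e (n k)‖ ∧
      ‖∑ k ∈ s, a k • e (n k)‖ ≤ C * ‖∑ k ∈ s, a k • e k‖

/-! ### Schreier families -/

/-- `n ≤ A`: either `A = ∅` or `n ≤ min A`. -/
def natLE (n : ℕ) (A : Finset ℕ) : Prop := ∀ a ∈ A, n ≤ a

/-- `A < B`: either one is empty or `max A < min B`. -/
def finLT (A B : Finset ℕ) : Prop := ∀ a ∈ A, ∀ b ∈ B, a < b

/-- The Schreier families `S_α`, relative to a fixed assignment `lseq` of fundamental sequences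
to (countable) limit ordinals; here `lseq l n` denotes `λ_{n+1}` in 1-based notation. -/
def Schreier (lseq : Ordinal → ℕ → Ordinal) (α : Ordinal) : Set (Finset ℕ) :=
  Ordinal.limitRecOn α
    ({A | ∃ n : ℕ, 1 ≤ n ∧ A = {n}} ∪ {∅})
    (fun _ S => {A | ∃ n : ℕ, 1 ≤ n ∧ ∃ f : ℕ → Finset ℕ,
      (∀ i < n, f i ∈ S) ∧ natLE n (f 0) ∧
      (∀ i j : ℕ, i < j → j < n → finLT (f i) (f j)) ∧
      A = (Finset.range n).biUnion f})
    (fun o _ ih => {A | ∃ n : ℕ, natLE (n + 1) A ∧ ∃ h : lseq o n < o, A ∈ ih (lseq o n) h})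

/-- `lseq` is a legitimate assignment of fundamental sequences: to every countable limit
ordinal `l` it assigns a strictly increasing sequence of smaller ordinals with supremum `l`. -/
def IsFundSeq (lseq : Ordinal → ℕ → Ordinal) : Prop :=
  ∀ l : Ordinal, Order.IsSuccLimit l → l < (Cardinal.aleph 1).ord →
    StrictMono (lseq l) ∧ (∀ n, lseq l n < l) ∧ (⨆ n, lseq l n) = l

/-! ### The space `c₀` and `Z[S_α]_{c₀}` -/

/-- The Banach space `c₀` of real sequences vanishing at infinity, with the sup norm. -/
abbrev c0 : Type := ZeroAtInftyContinuousMap ℕ ℝ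

/-- The standard unit vector basis of `c₀`. -/
def stdBasis (n : ℕ) : c0 :=
  { toFun := fun m => if m = n then (1 : ℝ) else 0
    continuous_toFun := continuous_of_discreteTopology
    zero_at_infty' := by
      refine Filter.Tendsto.mono_left ?_ Filter.cocompact_le_cofinite
      refine tendsto_nhds_of_eventually_eq ?_
      refine Filter.eventually_cofinite.mpr (Set.Finite.subset (Set.finite_singleton n) ?_)
      intro m hm
      by_contra h
      exact hm (if_neg h) }

/-- The metric space `Z[S_α]_{c₀}` (as a subset of `c₀`). -/
def ZSchreierSet (lseq : Ordinal → ℕ → Ordinal) (α : Ordinal) : Set c0 :=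
  {x | ∃ A ∈ Schreier lseq α, ∃ t : ℕ → ℤ, x = ∑ i ∈ A, (t i : ℝ) • stdBasis i}

/-! ### Eventual domination -/

/-- The family `F ⊆ ℕ^ℕ` is bounded with respect to eventual domination. -/
def EvDomBounded (F : Set (ℕ → ℕ)) : Prop :=
  ∃ g : ℕ → ℕ, ∀ f ∈ F, ∀ᶠ m in Filter.atTop, f m < g m

end

/-!
Encode a candidate coarse embedding of the dense sequence, together with integer-sampled moduli and
a witness that the lower modulus tends to infinity, as a point of the Polish space
`((ℕ → ℝ) × (ℕ → ℝ) × (ℕ → ℕ)) × (ℕ → E)`. The points satisfying the constraints on the first `k`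
indices form closed sets, and they carry a tree structure refining `<` on `Coa(D,E)`.
Iterating the derivative "keep the limits of extendable points" transfinitely, second countability
makes it stabilise at a countable ordinal `α`. If the stable derivative is empty, every node has
rank below `α`, and so does every element of `Coa(D,E)`. Otherwise every point of the stable
derivative is a limit of extendable points, so completeness yields a point satisfying all the
constraints at once, which extends from the dense sequence to a coarse embedding of `X`.
-/

universe u v

open Cardinal in
theorem exists_lt_ord_aleph_one_succ_eq {Y : Type u} [TopologicalSpace Y]
    [SecondCountableTopology Y] {ι : Type*} [Countable ι] {F : Ordinal.{v} → ι → Set Y}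
    (hanti : ∀ i, Antitone (F · i)) (hclosed : ∀ α i, IsClosed (F α i)) :
    ∃ α < (aleph 1).ord, ∀ i, F (Order.succ α) i = F α i := by
  by_contra! hne
  obtain ⟨B, hBc, -, hB⟩ := TopologicalSpace.exists_countable_basis Y
  have hdrop : ∀ α : Iio (aleph 1).ord, ∃ (i : ι) (b : B) (w : Y),
      w ∈ F α i ∧ w ∈ (b : Set Y) ∧ Disjoint (b : Set Y) (F (Order.succ α) i) := by
    rintro ⟨α, hα⟩
    obtain ⟨i, hi⟩ := hne α hα
    obtain ⟨w, hwα, hwsucc⟩ := not_subset.1 fun h =>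
      hi ((hanti i (Order.le_succ α)).antisymm h)
    obtain ⟨b, hbB, hwb, hb⟩ :=
      hB.exists_subset_of_mem_open hwsucc (hclosed _ i).isOpen_compl
    exact ⟨i, ⟨b, hbB⟩, w, hwα, hwb, Set.subset_compl_iff_disjoint_right.1 hb⟩
  choose i b w hwF hwb hdisj using hdrop
  -- a later witness lies in every earlier `F (succ α)`, so the pair `(i, b)` cannot repeat
  have hinj : Function.Injective fun α => (i α, b α) := by
    refine Function.Injective.of_lt_imp_ne fun γ δ hlt heq => ?_
    simp only [Prod.mk.injEq] at heq
    have hδ : w δ ∈ F (Order.succ γ.1) (i γ) :=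
      heq.1 ▸ hanti _ (Order.succ_le_of_lt hlt) (hwF δ)
    exact (hdisj γ).notMem_of_mem_left (heq.2 ▸ hwb δ) hδ
  have : Countable B := hBc.to_subtype
  have hcount := mk_le_aleph0_iff.2 hinj.countable
  rw [mk_Iio_ordinal, card_ord] at hcount
  simp at hcount

theorem Acc.exists_rank_le_of_map {A B : Type u} {r : A → A → Prop} {s : B → B → Prop}
    (f : A → B) (hf : ∀ a a', r a' a → s (f a') (f a)) {b : B} (hb : Acc s b) {a : A}
    (hab : f a = b) : ∃ ha : Acc r a, ha.rank ≤ hb.rank := by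
  induction hb generalizing a with
  | intro b hb IH =>
  subst hab
  have hpred : ∀ a', r a' a → ∃ ha' : Acc r a', ha'.rank < (Acc.intro (f a) hb).rank :=
    fun a' h =>
      let ⟨ha', hle⟩ := IH _ (hf a a' h) rfl
      ⟨ha', hle.trans_lt (Acc.rank_lt_of_rel _ (hf a a' h))⟩
  refine ⟨⟨a, fun a' h => (hpred a' h).1⟩, ?_⟩
  rw [Acc.rank_eq]
  exact Ordinal.iSup_le fun a' : {a' // r a' a} => Order.succ_le_of_lt (hpred a'.1 a'.2).2

section TreeDerivative

variable {Y : Type u} [TopologicalSpace Y] (C : ℕ → Set Y) (S : ℕ → Y → Y → Prop)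

def TreeRel (a b : ℕ × Y) : Prop :=
  a.1 = b.1 + 1 ∧ a.2 ∈ C a.1 ∧ b.2 ∈ C b.1 ∧ S b.1 a.2 b.2

def extendablePart (D : ℕ → Set Y) (k : ℕ) : Set Y :=
  {w ∈ D k | ∃ w' ∈ D (k + 1), S k w' w}

def treeDeriv (α : Ordinal.{u}) (k : ℕ) : Set Y :=
  C k ∩ ⋂ β : Iio α, closure (extendablePart S (fun k' => treeDeriv β.1 k') k)
termination_by α
decreasing_by exact β.2

variable {C S}

theorem treeDeriv_eq (α : Ordinal.{u}) (k : ℕ) :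
    treeDeriv C S α k =
      C k ∩ ⋂ β : Iio α, closure (extendablePart S (treeDeriv C S β.1) k) := by
  rw [treeDeriv]

theorem treeDeriv_subset (α : Ordinal.{u}) (k : ℕ) : treeDeriv C S α k ⊆ C k := by
  rw [treeDeriv_eq]
  exact inter_subset_left

theorem treeDeriv_antitone (k : ℕ) : Antitone (treeDeriv C S · k) := by
  intro β α hβα
  simp only [treeDeriv_eq (C := C) (S := S)]
  exact inter_subset_inter_right _
    (iInter_mono' fun γ => ⟨⟨γ.1, γ.2.trans_le hβα⟩, subset_rfl⟩)

theorem isClosed_treeDeriv (hC : ∀ k, IsClosed (C k)) (α : Ordinal.{u}) (k : ℕ) :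
    IsClosed (treeDeriv C S α k) := by
  rw [treeDeriv_eq]
  exact (hC k).inter (isClosed_iInter fun _ => isClosed_closure)

theorem treeDeriv_succ_subset (α : Ordinal.{u}) (k : ℕ) :
    treeDeriv C S (Order.succ α) k ⊆ closure (extendablePart S (treeDeriv C S α) k) := by
  rw [treeDeriv_eq]
  exact fun w hw => mem_iInter.1 hw.2 ⟨α, Order.lt_succ α⟩

theorem exists_treeDeriv_succ_eq [SecondCountableTopology Y] (hC : ∀ k, IsClosed (C k)) :
    ∃ α < (Cardinal.aleph 1).ord, ∀ k, treeDeriv C S (Order.succ α) k = treeDeriv C S α k :=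
  exists_lt_ord_aleph_one_succ_eq treeDeriv_antitone (isClosed_treeDeriv hC)

theorem exists_acc_rank_lt_of_notMem_treeDeriv (α : Ordinal.{u}) {k : ℕ} {w : Y} (hw : w ∈ C k)
    (hα : w ∉ treeDeriv C S α k) : ∃ h : Acc (TreeRel C S) (k, w), h.rank < α := by
  induction α using WellFoundedLT.induction generalizing k w with
  | _ α IH =>
  obtain ⟨⟨β, hβ⟩, hβw⟩ : ∃ β : Iio α, w ∉ closure (extendablePart S (treeDeriv C S β) k) := by
    by_contra! h
    exact hα (by rw [treeDeriv_eq]; exact ⟨hw, mem_iInter.2 h⟩)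
  by_cases hwβ : w ∈ treeDeriv C S β k
  · -- no child of `w` survives to stage `β`, otherwise `w` would be extendable at stage `β`
    have hchild : ∀ a, TreeRel C S a (k, w) → ∃ h : Acc (TreeRel C S) a, h.rank < β := by
      rintro ⟨k', w'⟩ ⟨rfl, hw', -, hS⟩
      exact IH β hβ hw' fun hw'β => hβw (subset_closure ⟨hwβ, w', hw'β, hS⟩)
    refine ⟨⟨_, fun a ha => (hchild a ha).1⟩, ?_⟩
    rw [Acc.rank_eq]
    exact (Ordinal.iSup_le fun a : {a // TreeRel C S a (k, w)} =>
      Order.succ_le_of_lt (hchild a.1 a.2).2).trans_lt hβ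
  · obtain ⟨h, hr⟩ := IH β hβ hw hwβ
    exact ⟨h, hr.trans hβ⟩

end TreeDerivative

section CoarseTree

variable {E : Type u}

/-- A point `((u, v, s), φ)` consists of candidate lower and upper moduli `u`, `v` sampled at the
integers, a map `φ` on the indices of the dense sequence, and a witness `s` for `u → ∞` in the
form `m ≤ u (s m)`, which unlike `Tendsto u atTop atTop` is a closed condition. -/
abbrev CoarseData (E : Type u) : Type u := ((ℕ → ℝ) × (ℕ → ℝ) × (ℕ → ℕ)) × (ℕ → E)

def coarseExtends (k : ℕ) (w' w : CoarseData E) : Prop :=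
  w'.1 = w.1 ∧ ∀ i < k, w'.2 i = w.2 i

variable {X : Type*} [MetricSpace X] [MetricSpace E]

def IsCoarseModuli (u v : ℕ → ℝ) (s : ℕ → ℕ) : Prop :=
  Monotone u ∧ Monotone v ∧ (∀ n, 0 ≤ u n) ∧ (∀ n, 0 ≤ v n) ∧ ∀ m : ℕ, (m : ℝ) ≤ u (s m)

def IsCoarsePair (x : ℕ → X) (u v : ℕ → ℝ) (φ : ℕ → E) (i j : ℕ) : Prop :=
  u ⌊dist (x i) (x j)⌋₊ ≤ dist (φ i) (φ j) ∧ dist (φ i) (φ j) ≤ v ⌈dist (x i) (x j)⌉₊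

def coarseLevel (x : ℕ → X) (k : ℕ) : Set (CoarseData E) :=
  {w | IsCoarseModuli w.1.1 w.1.2.1 w.1.2.2 ∧
    ∀ i < k, ∀ j < k, IsCoarsePair x w.1.1 w.1.2.1 w.2 i j}

theorem isClosed_setOf_isCoarseModuli :
    IsClosed {m : (ℕ → ℝ) × (ℕ → ℝ) × (ℕ → ℕ) | IsCoarseModuli m.1 m.2.1 m.2.2} := by
  have hu : ∀ n, Continuous fun m : (ℕ → ℝ) × (ℕ → ℝ) × (ℕ → ℕ) => m.1 n := by fun_prop
  have hv : ∀ n, Continuous fun m : (ℕ → ℝ) × (ℕ → ℝ) × (ℕ → ℕ) => m.2.1 n := by fun_prop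
  have hs : ∀ n, Continuous fun m : (ℕ → ℝ) × (ℕ → ℝ) × (ℕ → ℕ) => m.2.2 n := by fun_prop
  -- `s m` is locally constant, so `m ≤ u (s m)` is closed
  have hwit : ∀ m : ℕ,
      IsClosed {p : (ℕ → ℝ) × (ℕ → ℝ) × (ℕ → ℕ) | (m : ℝ) ≤ p.1 (p.2.2 m)} := by
    intro m
    have : {p : (ℕ → ℝ) × (ℕ → ℝ) × (ℕ → ℕ) | (m : ℝ) ≤ p.1 (p.2.2 m)} =
        ⋂ c : ℕ, {p | p.2.2 m = c → (m : ℝ) ≤ p.1 c} := by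
      ext p; simp
    rw [this]
    exact isClosed_iInter fun c =>
      isClosed_imp ((isOpen_discrete {c}).preimage (hs m)) (isClosed_le continuous_const (hu c))
  simp only [IsCoarseModuli, Monotone, ofPred_and, ofPred_forall]
  exact (isClosed_iInter fun a => isClosed_iInter fun b => isClosed_iInter fun _ =>
      isClosed_le (hu a) (hu b)).inter <|
    (isClosed_iInter fun a => isClosed_iInter fun b => isClosed_iInter fun _ =>
      isClosed_le (hv a) (hv b)).inter <|
    (isClosed_iInter fun n => isClosed_le continuous_const (hu n)).inter <|
    (isClosed_iInter fun n => isClosed_le continuous_const (hv n)).inter <|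
    isClosed_iInter hwit

theorem isClosed_coarseLevel (x : ℕ → X) (k : ℕ) : IsClosed (coarseLevel (E := E) x k) := by
  refine (isClosed_setOf_isCoarseModuli.preimage continuous_fst).inter ?_
  show IsClosed {w : CoarseData E | ∀ i < k, ∀ j < k, IsCoarsePair x w.1.1 w.1.2.1 w.2 i j}
  simp only [IsCoarsePair, ofPred_forall, ofPred_and]
  exact isClosed_iInter fun i => isClosed_iInter fun _ => isClosed_iInter fun j =>
    isClosed_iInter fun _ =>
      (isClosed_le (by fun_prop) (by fun_prop)).inter (isClosed_le (by fun_prop) (by fun_prop))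

theorem coarseLevel_antitone (x : ℕ → X) : Antitone (coarseLevel (E := E) x) :=
  fun _ _ hkl _ hw => ⟨hw.1, fun i hi j hj => hw.2 i (hi.trans_le hkl) j (hj.trans_le hkl)⟩

def IsNear (n : ℕ) (ε : ℝ) (w' w : CoarseData E) : Prop :=
  ∀ i < n, dist (w'.1.1 i) (w.1.1 i) < ε ∧ dist (w'.1.2.1 i) (w.1.2.1 i) < ε ∧
    w'.1.2.2 i = w.1.2.2 i ∧ dist (w'.2 i) (w.2 i) < ε

theorem isOpen_setOf_isNear (n : ℕ) (ε : ℝ) (w : CoarseData E) :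
    IsOpen {z | IsNear n ε z w} := by
  have : {z | IsNear n ε z w} = ⋂ i ∈ Iio n,
      {z : CoarseData E | dist (z.1.1 i) (w.1.1 i) < ε ∧ dist (z.1.2.1 i) (w.1.2.1 i) < ε ∧
        z.1.2.2 i = w.1.2.2 i ∧ dist (z.2 i) (w.2 i) < ε} := by
    ext z; simp [IsNear]
  rw [this]
  refine (finite_Iio n).isOpen_biInter fun i _ => ?_
  simp only [ofPred_and]
  exact (isOpen_lt (by fun_prop) continuous_const).inter <|
    (isOpen_lt (by fun_prop) continuous_const).inter <|
    ((isOpen_discrete {w.1.2.2 i}).preimage (by fun_prop)).inter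
    (isOpen_lt (by fun_prop) continuous_const)

variable {C : ℕ → Set (CoarseData E)} {α : Ordinal.{u}}

theorem exists_isNear_mem_treeDeriv_succ {k n : ℕ} {ε : ℝ} {w : CoarseData E}
    (hstab : treeDeriv C coarseExtends (Order.succ α) k = treeDeriv C coarseExtends α k)
    (hw : w ∈ treeDeriv C coarseExtends α k) (hnk : n ≤ k) (hε : 0 < ε) :
    ∃ w' ∈ treeDeriv C coarseExtends α (k + 1), IsNear n ε w' w := by
  have hcl := treeDeriv_succ_subset α k (hstab ▸ hw)
  obtain ⟨z, hzw, -, w', hw', hext⟩ := mem_closure_iff.1 hcl _ (isOpen_setOf_isNear n ε w)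
    fun i _ => by simp [hε]
  exact ⟨w', hw', fun i hi => by simpa only [hext.1, hext.2 i (hi.trans_le hnk)] using hzw i hi⟩

theorem exists_tendsto_of_dist_succ_lt_half_pow {M : Type*} [PseudoMetricSpace M]
    [CompleteSpace M] {f : ℕ → M} {N : ℕ} (h : ∀ m ≥ N, dist (f (m + 1)) (f m) < (1 / 2) ^ m) :
    ∃ L, Tendsto f atTop (𝓝 L) := by
  refine cauchySeq_tendsto_of_complete ((cauchySeq_shift N).1 ?_)
  refine cauchySeq_of_le_geometric (1 / 2) ((1 / 2) ^ N) (by norm_num) fun m => ?_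
  rw [dist_comm, ← pow_add, add_comm N, add_right_comm]
  exact (h _ (by omega)).le

theorem exists_tendsto_of_isNear_succ [CompleteSpace E] {g : ℕ → CoarseData E}
    (hg : ∀ m, IsNear m ((1 / 2) ^ m) (g (m + 1)) (g m)) : ∃ w, Tendsto g atTop (𝓝 w) := by
  have hu : ∀ i, ∃ L, Tendsto (fun m => (g m).1.1 i) atTop (𝓝 L) := fun i =>
    exists_tendsto_of_dist_succ_lt_half_pow (N := i + 1) fun m hm => (hg m i hm).1
  have hv : ∀ i, ∃ L, Tendsto (fun m => (g m).1.2.1 i) atTop (𝓝 L) := fun i =>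
    exists_tendsto_of_dist_succ_lt_half_pow (N := i + 1) fun m hm => (hg m i hm).2.1
  have hφ : ∀ i, ∃ L, Tendsto (fun m => (g m).2 i) atTop (𝓝 L) := fun i =>
    exists_tendsto_of_dist_succ_lt_half_pow (N := i + 1) fun m hm => (hg m i hm).2.2.2
  have hs : ∀ i, ∀ m ≥ i + 1, (g m).1.2.2 i = (g (i + 1)).1.2.2 i := by
    intro i m hm
    induction m, hm using Nat.le_induction with
    | base => rfl
    | succ m hm ih => rw [(hg m i hm).2.2.1, ih]
  choose uL huL using hu
  choose vL hvL using hv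
  choose φL hφL using hφ
  exact ⟨((uL, vL, fun i => (g (i + 1)).1.2.2 i), φL),
    ((tendsto_pi_nhds.2 huL).prodMk_nhds ((tendsto_pi_nhds.2 hvL).prodMk_nhds
      (tendsto_pi_nhds.2 fun i => tendsto_nhds_of_eventually_eq
        ((eventually_ge_atTop (i + 1)).mono (hs i))))).prodMk_nhds (tendsto_pi_nhds.2 hφL)⟩

theorem exists_forall_mem_of_treeDeriv_succ_eq [CompleteSpace E] (hC : ∀ k, IsClosed (C k))
    (hCanti : Antitone C)
    (hstab : ∀ k, treeDeriv C coarseExtends (Order.succ α) k = treeDeriv C coarseExtends α k)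
    {k₀ : ℕ} {w₀ : CoarseData E} (hw₀ : w₀ ∈ treeDeriv C coarseExtends α k₀) :
    ∃ w, ∀ k, w ∈ C k := by
  have hstep : ∀ m, ∀ w ∈ treeDeriv C coarseExtends α (k₀ + m),
      ∃ w' ∈ treeDeriv C coarseExtends α (k₀ + m + 1), IsNear m ((1 / 2) ^ m) w' w :=
    fun m w hw => exists_isNear_mem_treeDeriv_succ (hstab _) hw (by omega) (by positivity)
  choose! next hnextD hnext using hstep
  let g : ℕ → CoarseData E := fun m => Nat.rec w₀ (fun m w => next m w) m
  have hgD : ∀ m, g m ∈ treeDeriv C coarseExtends α (k₀ + m) := by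
    intro m
    induction m with
    | zero => exact hw₀
    | succ m ih => exact hnextD m _ ih
  obtain ⟨w, hlim⟩ := exists_tendsto_of_isNear_succ (g := g) fun m => hnext m _ (hgD m)
  refine ⟨w, fun k => (hC k).mem_of_tendsto hlim ?_⟩
  filter_upwards [eventually_ge_atTop k] with m hm
  exact hCanti (by omega) (treeDeriv_subset α _ (hgD m))

end CoarseTree

section Embedding

variable {X E : Type*} [MetricSpace X] [MetricSpace E]

theorem exists_coarseEmbeddingMap_of_isCoarsePair {x : ℕ → X} (hx : DenseRange x)
    {u v : ℕ → ℝ} {s : ℕ → ℕ} {φ : ℕ → E} (hmod : IsCoarseModuli u v s)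
    (hφ : ∀ i j, IsCoarsePair x u v φ i j) : ∃ f : X → E, CoarseEmbeddingMap f := by
  obtain ⟨hu, hv, hu0, hv0, hs⟩ := hmod
  choose I hI using fun a : X => hx.exists_dist_lt a one_pos
  have hIdist : ∀ a b, |dist (x (I a)) (x (I b)) - dist a b| ≤ 2 := by
    intro a b
    have := dist_triangle4 (x (I a)) a b (x (I b))
    have := dist_triangle4 a (x (I a)) (x (I b)) b
    rw [abs_le]
    constructor <;> linarith [hI a, hI b, dist_comm a (x (I a)), dist_comm b (x (I b))]
  refine ⟨φ ∘ I, fun t => u ⌊t - 2⌋₊, fun t => v ⌈t + 2⌉₊,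
    fun a _ b _ hab => hu (Nat.floor_mono (by linarith)),
    fun a _ b _ hab => hv (Nat.ceil_mono (by linarith)),
    fun t _ => ⟨hu0 _, hv0 _⟩, ?_, fun a b => ⟨?_, ?_⟩⟩
  · refine tendsto_atTop.2 fun b => ?_
    filter_upwards [eventually_ge_atTop ((s ⌈b⌉₊ : ℝ) + 3)] with t ht
    calc b ≤ ⌈b⌉₊ := Nat.le_ceil b
      _ ≤ u (s ⌈b⌉₊) := hs _
      _ ≤ u ⌊t - 2⌋₊ := hu (Nat.le_floor (by linarith))
  · have := (abs_le.1 (hIdist a b)).1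
    exact (hu (Nat.floor_mono (by linarith))).trans (hφ (I a) (I b)).1
  · have := (abs_le.1 (hIdist a b)).2
    exact (hφ (I a) (I b)).2.trans (hv (Nat.ceil_mono (by linarith)))

theorem exists_coarseEmbeddingMap_of_forall_mem_coarseLevel {x : ℕ → X} (hx : DenseRange x)
    {w : CoarseData E} (hw : ∀ k, w ∈ coarseLevel x k) : ∃ f : X → E, CoarseEmbeddingMap f :=
  exists_coarseEmbeddingMap_of_isCoarsePair hx (hw 0).1 fun i j =>
    (hw (max i j + 1)).2 i (by omega) j (by omega)

end Embedding

section FromQuad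

variable {X E : Type*} [MetricSpace X] [MetricSpace E]

theorem natCast_mem_Zset {n : ℕ} (hn : 1 ≤ n) : (n : ℝ) ∈ Zset := ⟨n, hn, Or.inl rfl⟩

theorem tminus_of_one_le {d : ℝ} (hd : 1 ≤ d) : tminus d = ⌊d⌋₊ := by
  rw [tminus, if_pos hd, natCast_floor_eq_intCast_floor (by linarith)]

theorem tplus_mem_Zset_and_le_ceil {d : ℝ} (hd : 0 < d) : tplus d ∈ Zset ∧ tplus d ≤ ⌈d⌉₊ := by
  rcases le_or_gt 1 d with h1 | h1
  · have he : tplus d = ⌈d⌉₊ := by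
      rw [tplus, if_pos h1, natCast_ceil_eq_intCast_ceil (by linarith)]
    exact ⟨he ▸ natCast_mem_Zset (Nat.ceil_pos.2 hd), he.le⟩
  · have hinv : 1 ≤ ⌊1 / d⌋₊ := Nat.le_floor (by rw [Nat.cast_one, le_div_iff₀ hd]; linarith)
    have he : tplus d = 1 / ⌊1 / d⌋₊ := by
      rw [tplus, if_neg (not_le.2 h1), natCast_floor_eq_intCast_floor (by positivity)]
    refine ⟨⟨_, hinv, Or.inr he⟩, ?_⟩
    calc tplus d ≤ 1 := he ▸ div_le_one_of_le₀ (by exact_mod_cast hinv) (by positivity)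
      _ ≤ ⌈d⌉₊ := by exact_mod_cast Nat.ceil_pos.2 hd

/-- Capping by `n` keeps the value finite, since `toReal` sends `∞` to `0`. -/
def lowerSeq (κ : ℝ → ℝ≥0∞) (n : ℕ) : ℝ := (min (κ n) n).toReal

/-- `𝒵` does not contain `0`, so the value at `0` is taken from `1`. -/
def upperSeq (ω : ℝ → ℝ≥0∞) (n : ℕ) : ℝ := (ω (max n 1 : ℕ)).toReal

noncomputable def witnessSeq (κ : ℝ → ℝ≥0∞) (m : ℕ) : ℕ :=
  sInf {N : ℕ | m ≤ N ∧ (m : ℝ≥0∞) ≤ κ N}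

theorem lowerSeq_zero (κ : ℝ → ℝ≥0∞) : lowerSeq κ 0 = 0 := by simp [lowerSeq]

theorem isCoarseModuli_of_mcoarse {κ ω : ℝ → ℝ≥0∞} (hκ : Nmod κ) (hω : Nmod ω)
    (h : Mcoarse κ ω) : IsCoarseModuli (lowerSeq κ) (upperSeq ω) (witnessSeq κ) := by
  obtain ⟨hfin, htop⟩ := h
  have hmin_ne_top : ∀ n : ℕ, min (κ n) n ≠ ⊤ := fun n =>
    ne_top_of_le_ne_top (ENNReal.natCast_ne_top n) (min_le_right _ _)
  refine ⟨fun a b hab => ?_, fun a b hab => ?_, fun n => ENNReal.toReal_nonneg,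
    fun n => ENNReal.toReal_nonneg, fun m => ?_⟩
  · rcases Nat.eq_zero_or_pos a with rfl | ha
    · exact (lowerSeq_zero κ).trans_le ENNReal.toReal_nonneg
    · refine ENNReal.toReal_mono (hmin_ne_top b) (min_le_min ?_ (by exact_mod_cast hab))
      exact hκ (natCast_mem_Zset ha) (natCast_mem_Zset (ha.trans_le hab)) (by exact_mod_cast hab)
  · have hmax : max a 1 ≤ max b 1 := max_le_max_right 1 hab
    refine ENNReal.toReal_mono (hfin _ (natCast_mem_Zset (le_max_right b 1))).ne ?_
    exact hω (natCast_mem_Zset (le_max_right a 1)) (natCast_mem_Zset (le_max_right b 1))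
      (by exact_mod_cast hmax)
  · have hne : {N : ℕ | m ≤ N ∧ (m : ℝ≥0∞) ≤ κ N}.Nonempty :=
      ((eventually_ge_atTop m).and
        (htop.eventually (eventually_ge_nhds (ENNReal.natCast_lt_top m)))).exists
    obtain ⟨hmN, hκN⟩ := Nat.sInf_mem hne
    rw [← ENNReal.toReal_natCast m]
    exact ENNReal.toReal_mono (hmin_ne_top _) (le_min hκN (by exact_mod_cast hmN))

theorem isCoarsePair_of_mem_omegaSet {x : ℕ → X} {q : Quad E} (hq : q ∈ OmegaSet x)
    (hfin : ∀ r ∈ Zset, q.omega r < ⊤) {i j : ℕ} (hi : i < q.k) (hj : j < q.k) :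
    IsCoarsePair x (lowerSeq q.kappa) (upperSeq q.omega) q.phi i j := by
  obtain ⟨hκ, hω, hφ, hpair⟩ := hq
  by_cases hxy : x i = x j
  · rw [IsCoarsePair, hxy, hφ i j hxy, dist_self, dist_self, Nat.floor_zero, lowerSeq_zero]
    exact ⟨le_rfl, ENNReal.toReal_nonneg⟩
  have hd : 0 < dist (x i) (x j) := dist_pos.2 hxy
  obtain ⟨hlow, hupp⟩ := hpair i hi j hj hxy
  obtain ⟨hZ, hle⟩ := tplus_mem_Zset_and_le_ceil hd
  have hceil : 1 ≤ ⌈dist (x i) (x j)⌉₊ := Nat.ceil_pos.2 hd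
  rw [IsCoarsePair, dist_edist (q.phi i)]
  constructor
  · rcases Nat.eq_zero_or_pos ⌊dist (x i) (x j)⌋₊ with h0 | h0
    · rw [h0, lowerSeq_zero]
      exact ENNReal.toReal_nonneg
    · rw [tminus_of_one_le (Nat.floor_pos.1 h0)] at hlow
      exact ENNReal.toReal_mono (edist_ne_top _ _) ((min_le_left _ _).trans hlow)
  · rw [upperSeq, max_eq_left hceil]
    exact ENNReal.toReal_mono (hfin _ (natCast_mem_Zset hceil)).ne
      (hupp.trans (hω hZ (natCast_mem_Zset hceil) hle))

noncomputable def toCoarseData (q : Quad E) : ℕ × CoarseData E :=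
  (q.k, ((lowerSeq q.kappa, upperSeq q.omega, witnessSeq q.kappa), q.phi))

theorem toCoarseData_mem_coarseLevel {x : ℕ → X} {q : Quad E} (hq : q ∈ CoaSet x) :
    (toCoarseData q).2 ∈ coarseLevel x (toCoarseData q).1 :=
  ⟨isCoarseModuli_of_mcoarse hq.1.1 hq.1.2.1 hq.2, fun _ hi _ hj =>
    isCoarsePair_of_mem_omegaSet hq.1 hq.2.1 hi hj⟩

theorem treeRel_toCoarseData {x : ℕ → X} {p q : Quad E} (hp : p ∈ CoaSet x)
    (hq : q ∈ CoaSet x) (hpq : QuadRel p q) :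
    TreeRel (coarseLevel x) coarseExtends (toCoarseData p) (toCoarseData q) := by
  obtain ⟨hκ, hω, hk, hφ⟩ := hpq
  exact ⟨hk, toCoarseData_mem_coarseLevel hp, toCoarseData_mem_coarseLevel hq,
    by simp only [toCoarseData, hκ, hω], hφ⟩

end FromQuad

theorem stmt7_general {X E : Type*} [MetricSpace X] [MetricSpace E]
    [TopologicalSpace.SeparableSpace E] [CompleteSpace E]
    (x : ℕ → X) (hx : DenseRange x) :
    (∃ f : X → E, CoarseEmbeddingMap f) ∨
      ∃ hwf : WellFounded fun p q : ↥(CoaSet (E := E) x) => QuadRel p.1 q.1,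
        relRankOn QuadRel (CoaSet (E := E) x) hwf < (Cardinal.aleph 1).ord := by
  have : SecondCountableTopology E := UniformSpace.secondCountable_of_separable E
  obtain ⟨α, hα, hstab⟩ :=
    exists_treeDeriv_succ_eq (S := coarseExtends) (isClosed_coarseLevel (E := E) x)
  by_cases hne : ∃ k, (treeDeriv (coarseLevel (E := E) x) coarseExtends α k).Nonempty
  · obtain ⟨k, w, hw⟩ := hne
    obtain ⟨w, hw⟩ := exists_forall_mem_of_treeDeriv_succ_eq (isClosed_coarseLevel x)
      (coarseLevel_antitone x) hstab hw
    exact Or.inl (exists_coarseEmbeddingMap_of_forall_mem_coarseLevel hx hw)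
  have hrank : ∀ q : CoaSet (E := E) x,
      ∃ h : Acc (fun p q : CoaSet (E := E) x => QuadRel p.1 q.1) q, h.rank < α := by
    intro q
    obtain ⟨h, hlt⟩ := exists_acc_rank_lt_of_notMem_treeDeriv α
      (toCoarseData_mem_coarseLevel q.2) fun h => hne ⟨_, _, h⟩
    obtain ⟨hq, hle⟩ := h.exists_rank_le_of_map (fun q : CoaSet x => toCoarseData q.1)
      (fun a a' h => treeRel_toCoarseData a'.2 a.2 h) rfl
    exact ⟨hq, hle.trans_lt hlt⟩
  refine Or.inr ⟨⟨fun q => (hrank q).1⟩, ?_⟩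
  exact (Ordinal.iSup_le fun q => Order.succ_le_of_lt (hrank q).2).trans_lt hα

theorem stmt7 {X E : Type*} [MetricSpace X] [MetricSpace E]
    [TopologicalSpace.SeparableSpace X] [CompleteSpace X]
    [TopologicalSpace.SeparableSpace E] [CompleteSpace E]
    (x : ℕ → X) (hx : DenseRange x) :
    (∃ f : X → E, CoarseEmbeddingMap f) ∨
      ∃ hwf : WellFounded fun p q : ↥(CoaSet (E := E) x) => QuadRel p.1 q.1,
        relRankOn QuadRel (CoaSet (E := E) x) hwf < (Cardinal.aleph 1).ord :=
  stmt7_general x hx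
end

section
/- Let X and E be separable complete metric spaces, with X non-empty, and let D = {x₁,x₂,…} be a fixed enumeration of a countable dense subset of X. Then either X bi-Lipschitz embeds into E, or the relation < is well-founded on Lip(D,E) and rk(Lip(D,E), <) is a countable ordinal. -/
open Filter Set Topology
open scoped ENNReal

/-!
A quadruple in `Lip(D,E)` with moduli `(κ, ω)` is an exactly `K`-bi-Lipschitz map on
`x 0, …, x (k-1)`, for a natural number `K` depending only on `(κ, ω)`. Coding its values by
indices into a dense sequence `e` of `E`, at precision `2⁻⁽ᵏ⁺¹⁾`, turns `<` into a relation on the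
countable set `ℕ × List ℕ`. Along an infinite descending chain of codes the coded points converge,
since the precisions are summable, to a `K`-bi-Lipschitz map on the dense set `range x`, which
extends to `X` because `E` is complete. So if `X` does not embed, the coded relation is
well-founded on a countable set; its ranks are countable, and ranks can only drop along a
homomorphism.
-/

open Ordinal in
lemma WellFounded.rank_lt_omega_one {α : Type*} [Countable α] {r : α → α → Prop}
    (h : WellFounded r) (a : α) : (h.apply a).rank < ω₁ := by
  induction a using h.induction with
  | _ a ih =>
    rw [Acc.rank_eq]
    exact iSup_lt_omega_one fun b => (Cardinal.isSuccLimit_omega 1).succ_lt (ih b b.2)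

universe u

lemma WellFounded.rank_le_of_relHom {α β : Type u} {r : α → α → Prop} {s : β → β → Prop}
    (hr : WellFounded r) (hs : WellFounded s) (f : α → β) (hf : ∀ a b, r a b → s (f a) (f b))
    (a : α) : (hr.apply a).rank ≤ (hs.apply (f a)).rank := by
  induction a using hr.induction with
  | _ a ih =>
    rw [Acc.rank_eq]
    exact Ordinal.iSup_le fun b =>
      Order.succ_le_of_lt ((ih b b.2).trans_lt (Acc.rank_lt_of_rel _ (hf b a b.2)))

open Ordinal in
lemma relRankOn_lt_omega_one_of_relHom {A : Type u} {B : Type} [Countable B] {S : Set A}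
    {r : A → A → Prop} {s : B → B → Prop} (hs : WellFounded s) (f : S → B)
    (hf : ∀ p q : S, r p q → s (f p) (f q)) :
    ∃ hr : WellFounded fun p q : S => r p q, relRankOn r S hr < (Cardinal.aleph 1).ord := by
  have hs' : WellFounded (InvImage s ULift.down : ULift.{u} B → _ → Prop) := InvImage.wf _ hs
  have hr : WellFounded fun p q : S => r p q := Subrelation.wf (hf _ _) (InvImage.wf f hs)
  refine ⟨hr, ?_⟩
  rw [Cardinal.ord_aleph]
  refine lt_of_le_of_lt (Ordinal.iSup_le fun p => ?_)
    (iSup_lt_omega_one fun b => (Cardinal.isSuccLimit_omega 1).succ_lt (hs'.rank_lt_omega_one b))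
  exact (Order.succ_le_succ (hr.rank_le_of_relHom hs' (ULift.up ∘ f) hf p)).trans
    (Ordinal.le_iSup (fun b : ULift.{u} B => Order.succ (hs'.apply b).rank) (ULift.up (f p)))

lemma cauchySeq_of_dist_succ_le_half_pow {E : Type*} [PseudoMetricSpace E] {v : ℕ → E} {N : ℕ}
    (hv : ∀ n ≥ N, dist (v (n + 1)) (v n) ≤ 2⁻¹ ^ n) : CauchySeq v := by
  refine (cauchySeq_shift N).1 (cauchySeq_of_le_geometric 2⁻¹ (2⁻¹ ^ N) (by norm_num) fun n => ?_)
  rw [dist_comm, add_right_comm, ← pow_add, add_comm N]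
  exact hv _ le_add_self

lemma exists_biLipschitzEmbeddingMap_of_denseRange {ι X E : Type*} [MetricSpace X]
    [MetricSpace E] [CompleteSpace E] {x : ι → X} (hx : DenseRange x) {ψ : ι → E} {c C : ℝ}
    (hc : 0 < c) (hcC : c ≤ C)
    (hψ : ∀ i j, c * dist (x i) (x j) ≤ dist (ψ i) (ψ j) ∧
      dist (ψ i) (ψ j) ≤ C * dist (x i) (x j)) :
    ∃ f : X → E, BiLipschitzEmbeddingMap f := by
  set g : range x → E := ψ ∘ rangeSplitting x
  have hg (p q : range x) : c * dist p q ≤ dist (g p) (g q) ∧ dist (g p) (g q) ≤ C * dist p q := by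
    simpa only [g, Function.comp_apply, Subtype.dist_eq, apply_rangeSplitting] using
      hψ (rangeSplitting x p) (rangeSplitting x q)
  have hgu : UniformContinuous g :=
    (LipschitzWith.of_dist_le_mul (K := ⟨C, by linarith⟩) fun p q => (hg p q).2).uniformContinuous
  have hext := (Dense.uniformContinuous_extend hx hgu).continuous
  refine ⟨Dense.extend hx g, c, C, hc, hcC, isClosed_property2 hx
    (p := fun a b => c * dist a b ≤ dist (Dense.extend hx g a) (Dense.extend hx g b) ∧
      dist (Dense.extend hx g a) (Dense.extend hx g b) ≤ C * dist a b) ?_ fun i j => ?_⟩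
  · rw [ofPred_and]
    refine .inter (isClosed_le ?_ ?_) (isClosed_le ?_ ?_) <;> fun_prop
  · have := hg ⟨x i, mem_range_self i⟩ ⟨x j, mem_range_self j⟩
    rwa [← Dense.extend_of_ind hx hgu, ← Dense.extend_of_ind hx hgu] at this

lemma intCast_mem_Zset {m : ℤ} (hm : 1 ≤ m) : (m : ℝ) ∈ Zset :=
  ⟨m.toNat, by omega, Or.inl (by exact_mod_cast (Int.toNat_of_nonneg (by omega)).symm)⟩

lemma one_div_intCast_mem_Zset {m : ℤ} (hm : 1 ≤ m) : 1 / (m : ℝ) ∈ Zset :=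
  ⟨m.toNat, by omega, Or.inr (by rw [← Int.cast_natCast, Int.toNat_of_nonneg (by omega)])⟩

lemma tminus_mem_Zset {t : ℝ} (ht : 0 < t) : tminus t ∈ Zset := by
  unfold tminus
  split_ifs with h
  · exact intCast_mem_Zset (Int.le_floor.2 (by exact_mod_cast h))
  · exact one_div_intCast_mem_Zset (Int.one_le_ceil_iff.2 (by positivity))

lemma tplus_mem_Zset {t : ℝ} (ht : 0 < t) : tplus t ∈ Zset := by
  unfold tplus
  split_ifs with h
  · exact intCast_mem_Zset (Int.one_le_ceil_iff.2 ht)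
  · exact one_div_intCast_mem_Zset (Int.le_floor.2 (by rw [le_div_iff₀ ht]; push_cast; linarith))

lemma half_le_tminus {t : ℝ} (ht : 0 < t) : t / 2 ≤ tminus t := by
  unfold tminus
  split_ifs with h
  · have h1 : (1 : ℝ) ≤ ⌊t⌋ := by exact_mod_cast Int.le_floor.2 (by exact_mod_cast h)
    linarith [Int.lt_floor_add_one t]
  · have h1 : (0 : ℝ) < ⌈1 / t⌉ := by exact_mod_cast Int.one_le_ceil_iff.2 (by positivity)
    have h2 : t * ⌈1 / t⌉ < 1 + t := by
      have := mul_lt_mul_of_pos_left (Int.ceil_lt_add_one (1 / t)) ht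
      rwa [mul_add, mul_one_div_cancel ht.ne', mul_one] at this
    rw [le_div_iff₀ h1]
    linarith

lemma tplus_le_two_mul {t : ℝ} (ht : 0 < t) : tplus t ≤ 2 * t := by
  unfold tplus
  split_ifs with h
  · linarith [Int.ceil_lt_add_one t]
  · have h1 : (1 : ℝ) ≤ ⌊1 / t⌋ := by
      exact_mod_cast Int.le_floor.2 (by rw [le_div_iff₀ ht]; push_cast; linarith)
    have h2 : 1 < t * (⌊1 / t⌋ + 1) := by
      have := mul_lt_mul_of_pos_left (Int.lt_floor_add_one (1 / t)) ht
      rwa [mul_one_div_cancel ht.ne'] at this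
    rw [div_le_iff₀ (by linarith)]
    nlinarith

def lipConstants (κ ω : ℝ → ℝ≥0∞) : Set ℕ :=
  {K | 0 < K ∧ ∀ t : ℝ, 0 < t →
    ENNReal.ofReal ((K : ℝ)⁻¹ * t) ≤ κ (tminus t) ∧ ω (tplus t) ≤ ENNReal.ofReal (K * t)}

lemma MLipschitz.lipConstants_nonempty {κ ω : ℝ → ℝ≥0∞} (h : MLipschitz κ ω) :
    (lipConstants κ ω).Nonempty := by
  obtain ⟨c, C, hc, hcC, hb⟩ := h
  obtain ⟨K, hK⟩ := exists_nat_gt (max (2 / c) (2 * C))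
  have hcK : 2 / c < K := (le_max_left _ _).trans_lt hK
  have hCK : 2 * C < K := (le_max_right _ _).trans_lt hK
  have hKpos : (0 : ℝ) < K := lt_trans (by positivity) hcK
  refine ⟨K, by exact_mod_cast hKpos, fun t ht => ⟨?_, ?_⟩⟩
  · refine le_trans (ENNReal.ofReal_le_ofReal ?_) (hb _ (tminus_mem_Zset ht)).1
    have hKc : (K : ℝ)⁻¹ ≤ c / 2 := by
      rw [inv_le_comm₀ hKpos (by positivity), inv_div]
      exact hcK.le
    nlinarith [half_le_tminus ht]
  · refine (hb _ (tplus_mem_Zset ht)).2.trans (ENNReal.ofReal_le_ofReal ?_)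
    nlinarith [tplus_le_two_mul ht]

lemma List.getD_map_range {α : Type*} {f : ℕ → α} {d : α} {k i : ℕ} (hi : i < k) :
    ((List.range k).map f).getD i d = f i := by
  simp [hi]

section

variable {X E : Type*} [MetricSpace X] [MetricSpace E]

def ApproxBiLipschitzOn (x : ℕ → X) (y : ℕ → E) (K ε : ℝ) (k : ℕ) : Prop :=
  ∀ i < k, ∀ j < k, K⁻¹ * dist (x i) (x j) ≤ dist (y i) (y j) + ε ∧
    dist (y i) (y j) ≤ K * dist (x i) (x j) + ε

lemma ApproxBiLipschitzOn.of_dist_le {x : ℕ → X} {φ y : ℕ → E} {K ε δ : ℝ} {k : ℕ}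
    (h : ApproxBiLipschitzOn x φ K ε k) (hy : ∀ i < k, dist (y i) (φ i) ≤ δ) :
    ApproxBiLipschitzOn x y K (ε + 2 * δ) k := by
  intro i hi j hj
  have h₁ := dist_triangle4 (φ i) (y i) (y j) (φ j)
  have h₂ := dist_triangle4 (y i) (φ i) (φ j) (y j)
  rw [dist_comm (φ i) (y i)] at h₁
  rw [dist_comm (φ j) (y j)] at h₂
  have := h i hi j hj
  constructor <;> linarith [hy i hi, hy j hj]

lemma biLipschitz_of_tendsto_approxBiLipschitzOn {x : ℕ → X} {u : ℕ → ℕ → E} {ψ : ℕ → E}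
    {K : ℝ} {ε : ℕ → ℝ} {k : ℕ → ℕ} (hu : ∀ i, Tendsto (fun n => u n i) atTop (𝓝 (ψ i)))
    (hε : Tendsto ε atTop (𝓝 0)) (hk : Tendsto k atTop atTop)
    (h : ∀ n, ApproxBiLipschitzOn x (u n) K (ε n) (k n)) (i j : ℕ) :
    K⁻¹ * dist (x i) (x j) ≤ dist (ψ i) (ψ j) ∧ dist (ψ i) (ψ j) ≤ K * dist (x i) (x j) := by
  have hd := (hu i).dist (hu j)
  have hev : ∀ᶠ n in atTop, i < k n ∧ j < k n :=
    (hk.eventually_gt_atTop i).and (hk.eventually_gt_atTop j)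
  constructor
  · refine le_of_tendsto_of_tendsto tendsto_const_nhds (by simpa using hd.add hε) ?_
    exact hev.mono fun n hn => (h n i hn.1 j hn.2).1
  · refine le_of_tendsto_of_tendsto hd (by simpa using tendsto_const_nhds.add hε) ?_
    exact hev.mono fun n hn => (h n i hn.1 j hn.2).2

lemma approxBiLipschitzOn_phi_of_mem_lipConstants {x : ℕ → X} {q : Quad E}
    (hq : q ∈ OmegaSet x) {K : ℕ} (hK : K ∈ lipConstants q.kappa q.omega) :
    ApproxBiLipschitzOn x q.phi K 0 q.k := by
  intro i hi j hj
  by_cases hij : x i = x j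
  · simp [hij, hq.2.2.1 i j hij]
  · have ht := dist_pos.2 hij
    obtain ⟨hlow, hup⟩ := hq.2.2.2 i hi j hj hij
    obtain ⟨hκ, hω⟩ := hK.2 _ ht
    rw [edist_dist] at hlow hup
    rw [add_zero, add_zero]
    exact ⟨(ENNReal.ofReal_le_ofReal_iff dist_nonneg).1 (hκ.trans hlow),
      (ENNReal.ofReal_le_ofReal_iff (by positivity)).1 (hup.trans hω)⟩

/-- A node `(K, l)` codes the points `e (l i)`, `i < l.length`; a node below another one extends
it by one point, moves the old points by at most `2⁻ᵏ` (`k` the old length), and codes a map on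
`x 0, …, x k` that is `K`-bi-Lipschitz up to `2⁻⁽ᵏ⁺¹⁾`. -/
def NodeRel (x : ℕ → X) (e : ℕ → E) (a b : ℕ × List ℕ) : Prop :=
  a.1 = b.1 ∧ 0 < a.1 ∧ a.2.length = b.2.length + 1 ∧
    (∀ i < b.2.length, dist (e (a.2.getD i 0)) (e (b.2.getD i 0)) ≤ 2⁻¹ ^ b.2.length) ∧
    ApproxBiLipschitzOn x (fun i => e (a.2.getD i 0)) a.1 (2⁻¹ ^ a.2.length) a.2.length

lemma exists_biLipschitzEmbeddingMap_of_nodeRel_chain [CompleteSpace E] {x : ℕ → X}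
    (hx : DenseRange x) (e : ℕ → E) {a : ℕ → ℕ × List ℕ}
    (ha : ∀ n, NodeRel x e (a (n + 1)) (a n)) :
    ∃ f : X → E, BiLipschitzEmbeddingMap f := by
  set K := (a 0).1
  set u : ℕ → ℕ → E := fun n i => e ((a n).2.getD i 0)
  have hK (n : ℕ) : (a n).1 = K := by
    induction n with
    | zero => rfl
    | succ n ih => exact (ha n).1.trans ih
  have hk (n : ℕ) : (a n).2.length = (a 0).2.length + n := by
    induction n with
    | zero => rfl
    | succ n ih => rw [(ha n).2.2.1, ih]; rfl
  have hKpos : 0 < K := hK 1 ▸ (ha 0).2.1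
  have hcauchy (i : ℕ) : CauchySeq fun n => u n i :=
    cauchySeq_of_dist_succ_le_half_pow (N := i + 1) fun n hn =>
      ((ha n).2.2.2.1 i (by have := hk n; omega)).trans
        (pow_le_pow_of_le_one (by norm_num) (by norm_num) (by have := hk n; omega))
  choose ψ hψ using fun i => cauchySeq_tendsto_of_complete (hcauchy i)
  have hk' : Tendsto (fun n => (a (n + 1)).2.length) atTop atTop :=
    tendsto_atTop_mono (fun n => by rw [hk, id]; omega) tendsto_id
  have hbi := biLipschitz_of_tendsto_approxBiLipschitzOn (u := fun n => u (n + 1))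
    (fun i => (hψ i).comp (tendsto_add_atTop_nat 1))
    ((tendsto_pow_atTop_nhds_zero_of_lt_one (by norm_num) (by norm_num)).comp hk') hk'
    (fun n => hK (n + 1) ▸ (ha n).2.2.2.2)
  have hK1 : (1 : ℝ) ≤ K := by exact_mod_cast hKpos
  exact exists_biLipschitzEmbeddingMap_of_denseRange hx (by positivity)
    ((inv_le_one_of_one_le₀ hK1).trans hK1) hbi

lemma exists_relHom_lipSet_nodeRel (x : ℕ → X) {e : ℕ → E} (he : DenseRange e) :
    ∃ F : LipSet (E := E) x → ℕ × List ℕ,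
      ∀ p q : LipSet (E := E) x, QuadRel p.1 q.1 → NodeRel x e (F p) (F q) := by
  choose idx hidx using fun (z : E) (m : ℕ) =>
    Metric.denseRange_iff.1 he z (2⁻¹ ^ m) (by positivity)
  -- The least admissible constant is a function of `(κ, ω)`, hence preserved by `<`.
  refine ⟨fun q => (sInf (lipConstants q.1.kappa q.1.omega),
    (List.range q.1.k).map fun i => idx (q.1.phi i) (q.1.k + 1)), ?_⟩
  rintro ⟨p, hp⟩ ⟨q, hq⟩ ⟨hκ, hω, hk, hφ⟩
  dsimp only at hκ hω hk hφ
  have hK := Nat.sInf_mem hp.2.lipConstants_nonempty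
  dsimp only
  refine ⟨by rw [hκ, hω], hK.1, by simp [hk], fun i hi => ?_, ?_⟩
  · simp only [List.length_map, List.length_range] at hi ⊢
    rw [List.getD_map_range (hk ▸ hi.trans (Nat.lt_succ_self _)), List.getD_map_range hi,
      hφ i hi, hk]
    calc _ ≤ dist (q.phi i) (e (idx (q.phi i) (q.k + 1 + 1)))
          + dist (q.phi i) (e (idx (q.phi i) (q.k + 1))) := dist_triangle_left _ _ _
      _ ≤ 2⁻¹ ^ (q.k + 1 + 1) + 2⁻¹ ^ (q.k + 1) := add_le_add (hidx _ _).le (hidx _ _).le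
      _ ≤ 2⁻¹ ^ q.k := by
        rw [pow_succ, pow_succ]
        linarith [pow_pos (by norm_num : (0 : ℝ) < 2⁻¹) q.k]
  · simp only [List.length_map, List.length_range]
    have := (approxBiLipschitzOn_phi_of_mem_lipConstants hp.1 hK).of_dist_le
      (y := fun i => e (((List.range p.k).map fun i => idx (p.phi i) (p.k + 1)).getD i 0))
      (δ := 2⁻¹ ^ (p.k + 1)) fun i hi => by
        rw [List.getD_map_range hi, dist_comm]
        exact (hidx _ _).le
    convert this using 1
    ring

end

theorem stmt9_general {X E : Type*} [MetricSpace X] [MetricSpace E]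
    [TopologicalSpace.SeparableSpace E] [CompleteSpace E]
    (x : ℕ → X) (hx : DenseRange x) :
    (∃ f : X → E, BiLipschitzEmbeddingMap f) ∨
      ∃ hwf : WellFounded fun p q : ↥(LipSet (E := E) x) => QuadRel p.1 q.1,
        relRankOn QuadRel (LipSet (E := E) x) hwf < (Cardinal.aleph 1).ord := by
  by_cases hemb : ∃ f : X → E, BiLipschitzEmbeddingMap f
  · exact Or.inl hemb
  right
  rcases isEmpty_or_nonempty E with hE | hE
  · exact relRankOn_lt_omega_one_of_relHom (B := ℕ) wellFounded_lt
      (fun q => isEmptyElim (q.1.phi 0)) fun p => isEmptyElim (p.1.phi 0)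
  obtain ⟨e, he⟩ := TopologicalSpace.exists_dense_seq E
  obtain ⟨F, hF⟩ := exists_relHom_lipSet_nodeRel x he
  refine relRankOn_lt_omega_one_of_relHom ?_ F hF
  exact wellFounded_iff_isEmpty_descending_chain.2
    ⟨fun a => hemb (exists_biLipschitzEmbeddingMap_of_nodeRel_chain hx e a.2)⟩

theorem stmt9 {X E : Type*} [MetricSpace X] [MetricSpace E]
    [TopologicalSpace.SeparableSpace X] [CompleteSpace X]
    [TopologicalSpace.SeparableSpace E] [CompleteSpace E]
    (x : ℕ → X) (hx : DenseRange x) :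
    (∃ f : X → E, BiLipschitzEmbeddingMap f) ∨
      ∃ hwf : WellFounded fun p q : ↥(LipSet (E := E) x) => QuadRel p.1 q.1,
        relRankOn QuadRel (LipSet (E := E) x) hwf < (Cardinal.aleph 1).ord :=
  stmt9_general x hx
end

section
/- Let (e_n) be a basic sequence in a real Banach space X, let R be ℤ or ℚ, and let E be a metric space. The relation < is ill-founded on Lip(R,(e_n),E) if and only if there is an infinite subsequence e_{n₁}, e_{n₂}, e_{n₃}, … such that R[e_{n₁},e_{n₂},…] (the set of finite R-linear combinations of the e_{n_k}, with the norm-induced metric) bi-Lipschitz embeds into E. -/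
open Filter Set Topology
open scoped ENNReal

/-!
A descending `<`-chain in `Lip(R,(eₙ),E)` has constant moduli, growing index sets
`A₀ ⊆ A₁ ⊆ ⋯` and compatible maps, so the maps glue to one map on `R[e_{m₀},e_{m₁},…]`, where
`m₀ < m₁ < ⋯` are the indices added along the chain. Since `t/2 ≤ t₋ ≤ t ≤ t₊ ≤ 2t`, Lipschitz moduli `κ ≥ c·r`, `ω ≤ C·r` then make
the glued map `(c/2, 2C)`-bi-Lipschitz. Conversely, a bi-Lipschitz embedding of `R[e_{n₁},e_{n₂},…]`
with constants `c ≤ C` yields the chain with linear moduli `c·r`, `C·r` and index sets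
`{n₁,…,n_k}`.
-/

lemma pos_of_mem_Zset {r : ℝ} (hr : r ∈ Zset) : 0 < r := by
  obtain ⟨n, hn, rfl | rfl⟩ := hr <;> positivity

lemma intCast_mem_Zset_s12 {z : ℤ} (hz : 1 ≤ z) : (z : ℝ) ∈ Zset :=
  ⟨z.toNat, by omega, Or.inl (by exact_mod_cast (Int.toNat_of_nonneg (by omega)).symm)⟩

lemma one_div_intCast_mem_Zset_s12 {z : ℤ} (hz : 1 ≤ z) : 1 / (z : ℝ) ∈ Zset :=
  ⟨z.toNat, by omega, Or.inr (by rw [← Int.cast_natCast, Int.toNat_of_nonneg (by omega)])⟩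

lemma tminus_spec {t : ℝ} (ht : 0 < t) :
    tminus t ∈ Zset ∧ t / 2 ≤ tminus t ∧ tminus t ≤ t := by
  unfold tminus
  split_ifs with h
  · have h1 : (1 : ℤ) ≤ ⌊t⌋ := Int.le_floor.mpr (by exact_mod_cast h)
    have h1' : (1 : ℝ) ≤ ⌊t⌋ := by exact_mod_cast h1
    refine ⟨intCast_mem_Zset_s12 h1, ?_, Int.floor_le t⟩
    rcases le_or_gt t 2 with h2 | h2
    · linarith
    · linarith [Int.sub_one_lt_floor t]
  · have hs : 1 < 1 / t := by rw [lt_one_div one_pos ht]; simpa using h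
    have h1 : (1 : ℤ) ≤ ⌈1 / t⌉ := Int.le_ceil_iff.mpr (by norm_num; linarith)
    refine ⟨one_div_intCast_mem_Zset_s12 h1, ?_, ?_⟩
    · calc t / 2 = 1 / (2 * (1 / t)) := by field_simp
        _ ≤ 1 / (⌈1 / t⌉ : ℝ) := by
          gcongr
          linarith [Int.ceil_lt_add_one (1 / t)]
    · calc 1 / (⌈1 / t⌉ : ℝ) ≤ 1 / (1 / t) := by gcongr; exact Int.le_ceil _
        _ = t := one_div_one_div t

lemma tplus_spec {t : ℝ} (ht : 0 < t) :
    tplus t ∈ Zset ∧ t ≤ tplus t ∧ tplus t ≤ 2 * t := by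
  unfold tplus
  split_ifs with h
  · have h1 : (1 : ℤ) ≤ ⌈t⌉ := Int.le_ceil_iff.mpr (by norm_num; linarith)
    exact ⟨intCast_mem_Zset_s12 h1, Int.le_ceil t, by linarith [Int.ceil_lt_add_one t]⟩
  · have hs : 1 < 1 / t := by rw [lt_one_div one_pos ht]; simpa using h
    have h1 : (1 : ℤ) ≤ ⌊1 / t⌋ := Int.le_floor.mpr (by exact_mod_cast hs.le)
    have h1' : (1 : ℝ) ≤ ⌊1 / t⌋ := by exact_mod_cast h1
    refine ⟨one_div_intCast_mem_Zset_s12 h1, ?_, ?_⟩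
    · calc t = 1 / (1 / t) := (one_div_one_div t).symm
        _ ≤ 1 / (⌊1 / t⌋ : ℝ) := by gcongr; exact Int.floor_le _
    · calc 1 / (⌊1 / t⌋ : ℝ) ≤ 1 / ((1 / t) / 2) := by
            gcongr
            rcases le_or_gt (1 / t) 2 with h2 | h2
            · linarith
            · linarith [Int.sub_one_lt_floor (1 / t)]
        _ = 2 * t := by field_simp

section RComb

variable {X : Type*} [NormedAddCommGroup X] [Module ℝ X] {R : Set ℝ}

lemma RComb_mono (h0 : (0 : ℝ) ∈ R) (e : ℕ → X) {A B : Finset ℕ} (hAB : A ⊆ B) :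
    RComb R e A ⊆ RComb R e B := by
  classical
  rintro x ⟨c, hc, rfl⟩
  refine ⟨fun i => if i ∈ A then c i else 0, fun i => by dsimp only; split_ifs; exacts [hc i, h0], ?_⟩
  rw [← Finset.sum_subset hAB fun i _ hiA => by simp [hiA]]
  exact Finset.sum_congr rfl fun i hi => by simp [hi]

lemma RComb_comp (h0 : (0 : ℝ) ∈ R) (e : ℕ → X) {m : ℕ → ℕ} (hm : Function.Injective m)
    (B : Finset ℕ) : RComb R (fun j => e (m j)) B = RComb R e (B.image m) := by
  classical
  ext x
  constructor
  · rintro ⟨c, hc, rfl⟩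
    refine ⟨fun i => if i ∈ B.image m then c (Function.invFun m i) else 0,
      fun i => by dsimp only; split_ifs; exacts [hc _, h0], ?_⟩
    rw [Finset.sum_image fun _ _ _ _ h => hm h]
    refine Finset.sum_congr rfl fun j hj => ?_
    dsimp only
    rw [if_pos (Finset.mem_image_of_mem m hj), Function.leftInverse_invFun hm j]
  · rintro ⟨c, hc, rfl⟩
    exact ⟨fun j => c (m j), fun j => hc _, Finset.sum_image fun _ _ _ _ h => hm h⟩

lemma RComb_image_subset_RCombAll (h0 : (0 : ℝ) ∈ R) (e : ℕ → X) {m : ℕ → ℕ}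
    (hm : Function.Injective m) (B : Finset ℕ) :
    RComb R e (B.image m) ⊆ RCombAll R fun j => e (m j) := by
  rw [← RComb_comp h0 e hm]
  exact Set.subset_iUnion (RComb R fun j => e (m j)) B

end RComb

lemma MLipschitz.exists_bounds {κ ω : ℝ → ℝ≥0∞} (h : MLipschitz κ ω) :
    ∃ c C : ℝ, 0 < c ∧ c ≤ C ∧ ∀ {t d : ℝ}, 0 < t → 0 ≤ d →
      κ (tminus t) ≤ ENNReal.ofReal d → ENNReal.ofReal d ≤ ω (tplus t) →
        c * t ≤ d ∧ d ≤ C * t := by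
  obtain ⟨c, C, hc, hcC, hκω⟩ := h
  refine ⟨c / 2, 2 * C, by positivity, by linarith, fun {t d} ht hd hκ hω => ?_⟩
  obtain ⟨hm, hm1, hm2⟩ := tminus_spec ht
  obtain ⟨hp, hp1, hp2⟩ := tplus_spec ht
  have h1 : c * tminus t ≤ d := (ENNReal.ofReal_le_ofReal_iff hd).mp ((hκω _ hm).1.trans hκ)
  have h2 : d ≤ C * tplus t :=
    (ENNReal.ofReal_le_ofReal_iff (by nlinarith)).mp (hω.trans (hκω _ hp).2)
  constructor <;> nlinarith

lemma nmod_ofReal_mul {c : ℝ} (hc : 0 ≤ c) : Nmod fun r => ENNReal.ofReal (c * r) :=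
  fun _ _ _ _ hrs => ENNReal.ofReal_le_ofReal (mul_le_mul_of_nonneg_left hrs hc)

lemma mLipschitz_ofReal_mul {c C : ℝ} (hc : 0 < c) (hcC : c ≤ C) :
    MLipschitz (fun r => ENNReal.ofReal (c * r)) (fun r => ENNReal.ofReal (C * r)) :=
  ⟨c, C + 1, hc, by linarith, fun r hr =>
    ⟨le_rfl, ENNReal.ofReal_le_ofReal (by nlinarith [pos_of_mem_Zset hr])⟩⟩

lemma precStar_image_range_succ {n : ℕ → ℕ} (hn : StrictMono n) (k : ℕ) :
    PrecStar ((Finset.range (k + 1)).image n) ((Finset.range k).image n) := by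
  refine ⟨n k, fun b hb => ?_, by rw [Finset.range_add_one, Finset.image_insert]⟩
  obtain ⟨j, hj, rfl⟩ := Finset.mem_image.mp hb
  exact hn (Finset.mem_range.mp hj)

section Chain

variable {X E : Type*} [NormedAddCommGroup X] [Module ℝ X] {R : Set ℝ}
  {e : ℕ → X} {a : ℕ → QuadF X E}

lemma moduli_eq_of_chain (hch : ∀ n, QuadFRel R e (a (n + 1)) (a n)) (n : ℕ) :
    (a n).kappa = (a 0).kappa ∧ (a n).omega = (a 0).omega := by
  induction n with
  | zero => exact ⟨rfl, rfl⟩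
  | succ n ih => exact ⟨(hch n).1.trans ih.1, (hch n).2.1.trans ih.2⟩

lemma monotone_A_of_chain (hch : ∀ n, QuadFRel R e (a (n + 1)) (a n)) :
    Monotone fun n => (a n).A :=
  monotone_nat_of_le_succ fun n => by
    obtain ⟨m, -, hA⟩ := (hch n).2.2.1
    exact hA ▸ Finset.subset_insert _ _

lemma phi_eq_of_chain (h0 : (0 : ℝ) ∈ R) (hch : ∀ n, QuadFRel R e (a (n + 1)) (a n))
    {k k' : ℕ} (hkk' : k ≤ k') {x : X} (hx : x ∈ RComb R e (a k).A) :
    (a k').phi x = (a k).phi x := by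
  induction k', hkk' using Nat.le_induction with
  | base => rfl
  | succ k' hk ih =>
    rw [(hch k').2.2.2 x (RComb_mono h0 e (monotone_A_of_chain hch hk) hx), ih]

lemma exists_strictMono_mem_A_of_chain (hch : ∀ n, QuadFRel R e (a (n + 1)) (a n)) :
    ∃ m : ℕ → ℕ, StrictMono m ∧ ∀ k, m k ∈ (a (k + 1)).A := by
  choose m hlt hA using fun k => (hch k).2.2.1
  have hmem : ∀ k, m k ∈ (a (k + 1)).A := fun k => hA k ▸ Finset.mem_insert_self _ _
  exact ⟨m, strictMono_nat_of_lt_succ fun k => hlt (k + 1) (m k) (hmem k), hmem⟩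

lemma exists_mem_RComb_of_chain (h0 : (0 : ℝ) ∈ R) (hch : ∀ n, QuadFRel R e (a (n + 1)) (a n))
    {m : ℕ → ℕ} (hm : Function.Injective m) (hmA : ∀ k, m k ∈ (a (k + 1)).A) {x : X}
    (hx : x ∈ RCombAll R fun k => e (m k)) : ∃ K, x ∈ RComb R e (a K).A := by
  obtain ⟨B, hB⟩ := Set.mem_iUnion.mp hx
  rw [RComb_comp h0 e hm] at hB
  refine ⟨B.sup id + 1, RComb_mono h0 e (fun i hi => ?_) hB⟩
  obtain ⟨j, hj, rfl⟩ := Finset.mem_image.mp hi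
  exact monotone_A_of_chain hch (Nat.succ_le_succ (Finset.le_sup (f := id) hj)) (hmA j)

variable (R e a) in
noncomputable def chainUnion (x : X) : E :=
  (a (Classical.epsilon fun K => x ∈ RComb R e (a K).A)).phi x

lemma chainUnion_eq (h0 : (0 : ℝ) ∈ R) (hch : ∀ n, QuadFRel R e (a (n + 1)) (a n)) {K : ℕ}
    {x : X} (hx : x ∈ RComb R e (a K).A) : chainUnion R e a x = (a K).phi x := by
  have hx' : x ∈ RComb R e (a (Classical.epsilon fun K => x ∈ RComb R e (a K).A)).A :=
    Classical.epsilon_spec (p := fun K => x ∈ RComb R e (a K).A) ⟨K, hx⟩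
  rw [chainUnion, ← phi_eq_of_chain h0 hch (le_max_left _ K) hx',
    phi_eq_of_chain h0 hch (le_max_right _ K) hx]

theorem exists_biLipschitz_of_illFoundedOn_LipTheta [MetricSpace E] (h0 : (0 : ℝ) ∈ R)
    (h : IllFoundedOn (QuadFRel (E := E) R e) (LipTheta R e)) :
    ∃ n : ℕ → ℕ, StrictMono n ∧
      ∃ f : ↥(RCombAll R fun k => e (n k)) → E, BiLipschitzEmbeddingMap f := by
  obtain ⟨a, haL, hch⟩ := h
  obtain ⟨m, hm, hmA⟩ := exists_strictMono_mem_A_of_chain hch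
  obtain ⟨c, C, hc, hcC, hbounds⟩ := (haL 0).2.exists_bounds
  refine ⟨m, hm, fun x => chainUnion R e a x, c, C, hc, hcC, fun x y => ?_⟩
  rcases eq_or_ne x y with rfl | hxy
  · simp
  obtain ⟨Kx, hx⟩ := exists_mem_RComb_of_chain h0 hch hm.injective hmA x.2
  obtain ⟨Ky, hy⟩ := exists_mem_RComb_of_chain h0 hch hm.injective hmA y.2
  replace hx := RComb_mono h0 e (monotone_A_of_chain hch (le_max_left Kx Ky)) hx
  replace hy := RComb_mono h0 e (monotone_A_of_chain hch (le_max_right Kx Ky)) hy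
  have hne : (x : X) ≠ y := Subtype.coe_injective.ne hxy
  obtain ⟨hκ, hω⟩ := (haL (max Kx Ky)).1.2.2 x hx y hy hne
  rw [(moduli_eq_of_chain hch _).1, edist_dist] at hκ
  rw [(moduli_eq_of_chain hch _).2, edist_dist] at hω
  dsimp only
  rw [Subtype.dist_eq, chainUnion_eq h0 hch hx, chainUnion_eq h0 hch hy]
  exact hbounds (dist_pos.mpr hne) dist_nonneg hκ hω

end Chain

theorem illFoundedOn_LipTheta_of_biLipschitz {X E : Type*} [NormedAddCommGroup X] [Module ℝ X]
    [MetricSpace E] {R : Set ℝ} {e : ℕ → X} (h0 : (0 : ℝ) ∈ R) {n : ℕ → ℕ} (hn : StrictMono n)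
    {f : ↥(RCombAll R fun k => e (n k)) → E} (hf : BiLipschitzEmbeddingMap f) :
    IllFoundedOn (QuadFRel (E := E) R e) (LipTheta R e) := by
  obtain ⟨c, C, hc, hcC, hcf⟩ := hf
  have h0S : (0 : X) ∈ RCombAll R fun k => e (n k) :=
    Set.mem_iUnion.mpr ⟨∅, ⟨fun _ => 0, fun _ => h0, by simp⟩⟩
  let φ : X → E := Function.extend Subtype.val f fun _ => f ⟨0, h0S⟩
  have hφ : ∀ z (hz : z ∈ RCombAll R fun k => e (n k)), φ z = f ⟨z, hz⟩ :=
    fun z hz => Subtype.val_injective.extend_apply f _ ⟨z, hz⟩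
  refine ⟨fun k => ⟨fun r => ENNReal.ofReal (c * r), fun r => ENNReal.ofReal (C * r),
      (Finset.range k).image n, φ⟩,
    fun k => ⟨⟨nmod_ofReal_mul hc.le, nmod_ofReal_mul (hc.le.trans hcC), ?_⟩,
      mLipschitz_ofReal_mul hc hcC⟩,
    fun k => ⟨rfl, rfl, precStar_image_range_succ hn k, fun _ _ => rfl⟩⟩
  intro x hx y hy hxy
  have hxS := RComb_image_subset_RCombAll h0 e hn.injective _ hx
  have hyS := RComb_image_subset_RCombAll h0 e hn.injective _ hy
  obtain ⟨-, -, hm⟩ := tminus_spec (dist_pos.mpr hxy)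
  obtain ⟨-, hp, -⟩ := tplus_spec (dist_pos.mpr hxy)
  obtain ⟨h1, h2⟩ := hcf ⟨x, hxS⟩ ⟨y, hyS⟩
  rw [Subtype.dist_eq] at h1 h2
  dsimp only
  rw [hφ x hxS, hφ y hyS, edist_dist]
  exact ⟨ENNReal.ofReal_le_ofReal (by nlinarith), ENNReal.ofReal_le_ofReal (by nlinarith)⟩

theorem stmt12_general {X E : Type*} [NormedAddCommGroup X] [NormedSpace ℝ X]
    [MetricSpace E] (e : ℕ → X)
    (R : Set ℝ) (hR : R = ZR ∨ R = QR) :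
    IllFoundedOn (QuadFRel (E := E) R e) (LipTheta (E := E) R e) ↔
      ∃ n : ℕ → ℕ, StrictMono n ∧
        ∃ f : ↥(RCombAll R fun k => e (n k)) → E, BiLipschitzEmbeddingMap f := by
  have h0 : (0 : ℝ) ∈ R := by
    rcases hR with rfl | rfl
    exacts [⟨0, Int.cast_zero⟩, ⟨0, Rat.cast_zero⟩]
  exact ⟨exists_biLipschitz_of_illFoundedOn_LipTheta h0,
    fun ⟨_, hn, _, hf⟩ => illFoundedOn_LipTheta_of_biLipschitz h0 hn hf⟩

theorem stmt12 {X E : Type*} [NormedAddCommGroup X] [NormedSpace ℝ X] [CompleteSpace X]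
    [MetricSpace E] (e : ℕ → X) (he : IsBasicSequence e)
    (R : Set ℝ) (hR : R = ZR ∨ R = QR) :
    IllFoundedOn (QuadFRel (E := E) R e) (LipTheta (E := E) R e) ↔
      ∃ n : ℕ → ℕ, StrictMono n ∧
        ∃ f : ↥(RCombAll R fun k => e (n k)) → E, BiLipschitzEmbeddingMap f :=
  stmt12_general e R hR
end

section
/- Let (e_n) be the standard unit vector basis of c₀ and let E be a separable complete metric space. Then either c₀ coarsely embeds into E, or the relation < is well-founded on Coa(ℤ,(e_n),E) and rk(Coa(ℤ,(e_n),E), <) is a countable ordinal. -/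
open Filter Set Topology
open scoped ENNReal

/-!
The set `Coa(ℤ,(eₙ),E)` is uncountable, so well-foundedness of `<` alone does not bound its rank
below `ω₁`. Each quadruple is therefore sent to a countable `code`: its index set `A`, the values of
`φ` up to an error `< 1` (read off a countable dense subset of `E`) on the integer vectors over `A`
with coefficients at most `|A|`, and the integers `⌈ω j⌉` and the thresholds of `κ` for `j ≤ |A|`.
The map is monotone for `<` and the pushed-forward relation on codes, so if the latter is
well-founded all ranks are countable. If instead the codes descend forever, the recorded data
stabilise along the sequence: the approximate values of `φ` fit together on all finitely supported
integer vectors, with uniform control from the stabilised moduli, and composing with coordinatewise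
rounding of `c₀` yields a coarse embedding.
-/

section Rank

open Ordinal

universe u

variable {α β : Type u} {r : α → α → Prop} {s : β → β → Prop}

theorem Acc.rank_le_rank_of_map (f : α → β) (hf : ∀ a b, r a b → s (f a) (f b)) {a : α}
    (ha : Acc r a) (hfa : Acc s (f a)) : ha.rank ≤ hfa.rank := by
  induction ha with
  | intro a _ ih =>
    rw [Acc.rank_eq]
    refine Ordinal.iSup_le fun ⟨b, hba⟩ => Order.succ_le_of_lt ?_
    exact (ih b hba (hfa.inv (hf b a hba))).trans_lt (hfa.rank_lt_of_rel (hf b a hba))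

theorem Acc.rank_lt_omega_one [Countable β] {b : β} (hb : Acc s b) : hb.rank < ω_ 1 := by
  induction hb with
  | intro b _ ih =>
    rw [Acc.rank_eq]
    exact Ordinal.iSup_lt_omega_one fun b' =>
      (Cardinal.isSuccLimit_omega 1).succ_lt (ih b'.1 b'.2)

theorem exists_relRankOn_lt_of_map [Countable β] {S : Set α} (hs : WellFounded s) (f : S → β)
    (hf : ∀ a b : S, r a b → s (f a) (f b)) :
    ∃ h : WellFounded fun a b : S => r a b, relRankOn r S h < (Cardinal.aleph 1).ord := by
  have h : WellFounded fun a b : S => r a b := Subrelation.wf (hf _ _) (InvImage.wf f hs)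
  refine ⟨h, ?_⟩
  rw [Cardinal.ord_aleph]
  refine (Ordinal.iSup_le fun a => ?_).trans_lt (Ordinal.iSup_lt_omega_one fun b =>
    (Cardinal.isSuccLimit_omega 1).succ_lt (hs.apply b).rank_lt_omega_one)
  exact (Order.succ_le_succ ((h.apply a).rank_le_rank_of_map f hf (hs.apply (f a)))).trans
    (Ordinal.le_iSup (fun b => Order.succ (hs.apply b).rank) (f a))

end Rank

theorem Finset.eqOn_of_image_graph_eq {α β : Type*} [DecidableEq (α × β)]
    {s : Finset α} {f g : α → β}
    (h : s.image (fun a => (a, f a)) = s.image (fun a => (a, g a))) : ∀ a ∈ s, f a = g a := by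
  intro a ha
  obtain ⟨b, -, hb⟩ := Finset.mem_image.1 (h ▸ Finset.mem_image_of_mem (fun a => (a, f a)) ha)
  obtain ⟨rfl, hgf⟩ := Prod.ext_iff.1 hb
  exact hgf.symm

namespace C0Embedding

noncomputable section

theorem abs_sub_le_dist (x y : c0) (j : ℕ) : |x j - y j| ≤ dist x y := by
  rw [← ZeroAtInftyContinuousMap.dist_toBCF_eq_dist]
  exact BoundedContinuousFunction.dist_coe_le_dist (f := x.toBCF) (g := y.toBCF) j

theorem dist_le_of_forall_abs_sub_le {x y : c0} {C : ℝ} (hC : 0 ≤ C)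
    (h : ∀ j, |x j - y j| ≤ C) : dist x y ≤ C := by
  rw [← ZeroAtInftyContinuousMap.dist_toBCF_eq_dist]
  exact (BoundedContinuousFunction.dist_le hC).2 h

def toC0 (c : ℕ →₀ ℤ) : c0 := ∑ i ∈ c.support, (c i : ℝ) • stdBasis i

theorem toC0_apply (c : ℕ →₀ ℤ) (j : ℕ) : toC0 c j = c j := by
  change AddMonoidHom.mk' (fun x : c0 => x j) (fun _ _ => rfl) (toC0 c) = c j
  rw [toC0, map_sum]
  simp +contextual [stdBasis]

theorem toC0_injective : Function.Injective toC0 := fun c c' h =>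
  Finsupp.ext fun j => by exact_mod_cast (toC0_apply c j).symm.trans (h ▸ toC0_apply c' j)

theorem toC0_mem_rComb {A : Finset ℕ} {c : ℕ →₀ ℤ} (h : c.support ⊆ A) :
    toC0 c ∈ RComb ZR stdBasis A :=
  ⟨fun i => c i, fun i => ⟨c i, rfl⟩, Finset.sum_subset h fun i _ hi => by
    rw [Finsupp.notMem_support_iff.1 hi, Int.cast_zero, zero_smul]⟩

theorem one_le_dist_toC0 {c c' : ℕ →₀ ℤ} (h : c ≠ c') : 1 ≤ dist (toC0 c) (toC0 c') := by
  obtain ⟨j, hj⟩ := DFunLike.ne_iff.1 h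
  have h1 : (1 : ℤ) ≤ |c j - c' j| := Int.one_le_abs (sub_ne_zero.2 hj)
  refine le_trans ?_ (abs_sub_le_dist _ _ j)
  rw [toC0_apply, toC0_apply]
  exact_mod_cast h1

theorem finite_support_round (x : c0) : (Function.support fun i => round (x i)).Finite := by
  have hx : Tendsto x cofinite (𝓝 0) := by
    rw [Nat.cofinite_eq_atTop]
    simpa using x.zero_at_infty'
  have h0 : ∀ᶠ y in 𝓝 (0 : ℝ), round y = 0 := by
    filter_upwards [Ioo_mem_nhds (by norm_num : -(1 / 2 : ℝ) < 0) (by norm_num : (0 : ℝ) < 1 / 2)]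
      with y hy
    exact round_eq_zero_iff.2 (Ioo_subset_Ico_self hy)
  exact Filter.eventually_cofinite.1 (hx.eventually h0)

def roundFinsupp (x : c0) : ℕ →₀ ℤ := Finsupp.ofSupportFinite _ (finite_support_round x)

def roundAlong (m : ℕ → ℕ) (x : c0) : ℕ →₀ ℤ := (roundFinsupp x).mapDomain m

variable {m : ℕ → ℕ}

theorem roundAlong_apply (hm : Function.Injective m) (x : c0) (i : ℕ) :
    roundAlong m x (m i) = round (x i) := by
  rw [roundAlong, Finsupp.mapDomain_apply hm, roundFinsupp, Finsupp.ofSupportFinite_coe]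

theorem roundAlong_apply_of_notMem_range (x : c0) {l : ℕ} (hl : l ∉ range m) :
    roundAlong m x l = 0 :=
  Finsupp.mapDomain_of_notMem_range _ l hl

theorem dist_toC0_roundAlong_le (hm : Function.Injective m) (x y : c0) :
    dist (toC0 (roundAlong m x)) (toC0 (roundAlong m y)) ≤ dist x y + 1 := by
  refine dist_le_of_forall_abs_sub_le (by positivity) fun l => ?_
  rw [toC0_apply, toC0_apply]
  by_cases hl : l ∈ range m
  · obtain ⟨i, rfl⟩ := hl
    rw [roundAlong_apply hm, roundAlong_apply hm]
    have hx := abs_sub_round (x i)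
    have hy := abs_sub_round (y i)
    have hxy := abs_sub_le_dist x y i
    rw [abs_le] at *
    constructor <;> linarith
  · rw [roundAlong_apply_of_notMem_range x hl, roundAlong_apply_of_notMem_range y hl]
    simp only [Int.cast_zero, sub_zero, abs_zero]
    positivity

theorem dist_le_dist_toC0_roundAlong (hm : Function.Injective m) (x y : c0) :
    dist x y ≤ dist (toC0 (roundAlong m x)) (toC0 (roundAlong m y)) + 1 := by
  refine dist_le_of_forall_abs_sub_le (by positivity) fun i => ?_
  have hx := abs_sub_round (x i)
  have hy := abs_sub_round (y i)
  have hc := abs_sub_le_dist (toC0 (roundAlong m x)) (toC0 (roundAlong m y)) (m i)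
  rw [toC0_apply, toC0_apply, roundAlong_apply hm, roundAlong_apply hm] at hc
  rw [abs_le] at *
  constructor <;> linarith

def intBox (A : Finset ℕ) (k : ℕ) : Finset (ℕ →₀ ℤ) :=
  A.finsupp fun _ => Finset.Icc (-(k : ℤ)) k

theorem mem_intBox {A : Finset ℕ} {k : ℕ} {c : ℕ →₀ ℤ} :
    c ∈ intBox A k ↔ c.support ⊆ A ∧ ∀ i ∈ A, |c i| ≤ k := by
  simp only [intBox, Finset.mem_finsupp_iff, Finset.mem_Icc, abs_le]

theorem intBox_mono {A A' : Finset ℕ} {k k' : ℕ} (hA : A ⊆ A') (hk : k ≤ k') :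
    intBox A k ⊆ intBox A' k' := by
  intro c hc
  rw [mem_intBox] at hc ⊢
  refine ⟨hc.1.trans hA, fun i _ => ?_⟩
  by_cases hi : i ∈ A
  · exact (hc.2 i hi).trans (by exact_mod_cast hk)
  · rw [Finsupp.notMem_support_iff.1 fun h => hi (hc.1 h)]
    simp

theorem tminus_of_one_le {t : ℝ} (h : 1 ≤ t) : tminus t = ⌊t⌋₊ := by
  rw [tminus, if_pos h, natCast_floor_eq_intCast_floor (by linarith)]

theorem tplus_of_one_le {t : ℝ} (h : 1 ≤ t) : tplus t = ⌈t⌉₊ := by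
  rw [tplus, if_pos h, natCast_ceil_eq_intCast_ceil (by linarith)]

theorem natCast_mem_Zset {n : ℕ} (h : 1 ≤ n) : (n : ℝ) ∈ Zset := ⟨n, h, Or.inl rfl⟩

def omegaCeil (ω : ℝ → ℝ≥0∞) (j : ℕ) : ℕ := ⌈(ω j).toReal⌉₊

/-- This is `0` when `κ` does not eventually stay above `M`. -/
def kappaThreshold (κ : ℝ → ℝ≥0∞) (M : ℕ) : ℕ := sInf {j | ∀ r : ℕ, j ≤ r → (M : ℝ≥0∞) ≤ κ r}

theorem le_of_kappaThreshold_le {κ : ℝ → ℝ≥0∞}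
    (hκ : Tendsto (fun n : ℕ => κ n) atTop (𝓝 ⊤)) (M : ℕ) {r : ℕ}
    (hr : kappaThreshold κ M ≤ r) : (M : ℝ≥0∞) ≤ κ r :=
  Nat.sInf_mem (eventually_atTop.1 (hκ.eventually (eventually_ge_nhds
    (ENNReal.natCast_lt_top M)))) r hr

section Quad

variable {E : Type*} [MetricSpace E] {q : QuadF c0 E} {c c' : ℕ →₀ ℤ}

theorem dist_phi_le_omegaCeil (hq : q ∈ CoaTheta ZR stdBasis) (hc : c.support ⊆ q.A)
    (hc' : c'.support ⊆ q.A) (hne : c ≠ c') :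
    dist (q.phi (toC0 c)) (q.phi (toC0 c')) ≤ omegaCeil q.omega ⌈dist (toC0 c) (toC0 c')⌉₊ := by
  have hD := one_le_dist_toC0 hne
  have h := (hq.1.2.2 _ (toC0_mem_rComb hc) _ (toC0_mem_rComb hc') (toC0_injective.ne hne)).2
  rw [tplus_of_one_le hD] at h
  have hfin := hq.2.1 _ (natCast_mem_Zset (Nat.one_le_ceil_iff.2 (zero_lt_one.trans_le hD)))
  rw [dist_edist]
  exact (ENNReal.toReal_mono hfin.ne h).trans (Nat.le_ceil _)

theorem le_dist_phi_of_kappaThreshold_le (hq : q ∈ CoaTheta ZR stdBasis) (hc : c.support ⊆ q.A)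
    (hc' : c'.support ⊆ q.A) (hne : c ≠ c') {M : ℕ}
    (hM : kappaThreshold q.kappa M ≤ ⌊dist (toC0 c) (toC0 c')⌋₊) :
    (M : ℝ) ≤ dist (q.phi (toC0 c)) (q.phi (toC0 c')) := by
  have hD := one_le_dist_toC0 hne
  have h := (hq.1.2.2 _ (toC0_mem_rComb hc) _ (toC0_mem_rComb hc') (toC0_injective.ne hne)).1
  rw [tminus_of_one_le hD] at h
  rw [dist_edist]
  simpa using ENNReal.toReal_mono (edist_ne_top _ _) ((le_of_kappaThreshold_le hq.2.2 M hM).trans h)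

end Quad

section Code

variable {E : Type*} [MetricSpace E] {D : Set E}

def nearPoint (hD : Dense D) (y : E) : D :=
  ⟨(hD.exists_dist_lt y one_pos).choose, (hD.exists_dist_lt y one_pos).choose_spec.1⟩

theorem dist_nearPoint_lt (hD : Dense D) (y : E) : dist y (nearPoint hD y) < 1 :=
  (hD.exists_dist_lt y one_pos).choose_spec.2

def modulusProfile (κ ω : ℝ → ℝ≥0∞) (j : ℕ) : ℕ × ℕ := (omegaCeil ω j, kappaThreshold κ j)

abbrev Code (D : Set E) : Type _ := Finset ℕ × Finset ((ℕ →₀ ℤ) × D) × List (ℕ × ℕ)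

open Classical in
def code (hD : Dense D) (q : QuadF c0 E) : Code D :=
  (q.A, (intBox q.A q.A.card).image fun c => (c, nearPoint hD (q.phi (toC0 c))),
    (List.range (q.A.card + 1)).map (modulusProfile q.kappa q.omega))

theorem agree_of_code_eq {hD : Dense D} {p q : QuadF c0 E} (h : code hD p = code hD q) :
    p.A = q.A ∧
      (∀ c ∈ intBox q.A q.A.card, nearPoint hD (p.phi (toC0 c)) = nearPoint hD (q.phi (toC0 c))) ∧
      ∀ j ≤ q.A.card, modulusProfile p.kappa p.omega j = modulusProfile q.kappa q.omega j := by
  classical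
  simp only [code, Prod.mk.injEq] at h
  obtain ⟨hA, hnear, hprofile⟩ := h
  rw [hA] at hnear hprofile
  exact ⟨hA, Finset.eqOn_of_image_graph_eq hnear,
    fun j hj => List.map_inj_left.1 hprofile j (List.mem_range.2 (Nat.lt_succ_of_le hj))⟩

def CodeRel (hD : Dense D) (b b' : Code D) : Prop :=
  ∃ p q : QuadF c0 E, p ∈ CoaTheta ZR stdBasis ∧ q ∈ CoaTheta ZR stdBasis ∧
    QuadFRel ZR stdBasis p q ∧ code hD p = b ∧ code hD q = b'

end Code

section Chain

variable {E : Type*} [MetricSpace E] {D : Set E}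

structure ApproxChain (hD : Dense D) where
  q : ℕ → QuadF c0 E
  m : ℕ → ℕ
  mem : ∀ n, q n ∈ CoaTheta ZR stdBasis
  A_succ : ∀ n, (q (n + 1)).A = insert (m n) (q n).A
  lt_m : ∀ n, ∀ a ∈ (q n).A, a < m n
  near_succ : ∀ n, ∀ c ∈ intBox (q n).A (q n).A.card,
    nearPoint hD ((q (n + 1)).phi (toC0 c)) = nearPoint hD ((q n).phi (toC0 c))
  profile_succ : ∀ n, ∀ j ≤ (q n).A.card,
    modulusProfile (q (n + 1)).kappa (q (n + 1)).omega j =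
      modulusProfile (q n).kappa (q n).omega j

theorem nonempty_approxChain_of_descending {hD : Dense D} {b : ℕ → Code D}
    (hb : ∀ n, CodeRel hD (b (n + 1)) (b n)) : Nonempty (ApproxChain hD) := by
  choose p q _ hq hpq hpb hqb using hb
  choose m hm hpA using fun n => (hpq n).2.2.1
  have hagree := fun n => agree_of_code_eq ((hqb (n + 1)).trans (hpb n).symm)
  have hsub : ∀ n, (q n).A ⊆ (p n).A := fun n => hpA n ▸ Finset.subset_insert _ _
  refine ⟨⟨q, m, hq, fun n => (hagree n).1.trans (hpA n), hm, fun n c hc => ?_,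
    fun n j hj => ?_⟩⟩
  · rw [(hagree n).2.1 c (intBox_mono (hsub n) (Finset.card_le_card (hsub n)) hc),
      (hpq n).2.2.2 _ (toC0_mem_rComb (mem_intBox.1 hc).1)]
  · rw [(hagree n).2.2 j (hj.trans (Finset.card_le_card (hsub n))), (hpq n).1, (hpq n).2.1]

namespace ApproxChain

variable {hD : Dense D} (C : ApproxChain hD)

def box (n : ℕ) : Finset (ℕ →₀ ℤ) := intBox (C.q n).A (C.q n).A.card

theorem card_succ (n : ℕ) : (C.q (n + 1)).A.card = (C.q n).A.card + 1 := by
  rw [C.A_succ, Finset.card_insert_of_notMem fun h => lt_irrefl _ (C.lt_m n _ h)]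

theorem le_card (n : ℕ) : n ≤ (C.q n).A.card := by
  induction n with
  | zero => exact Nat.zero_le _
  | succ n ih => rw [C.card_succ]; omega

theorem A_mono : Monotone fun n => (C.q n).A :=
  monotone_nat_of_le_succ fun n => C.A_succ n ▸ Finset.subset_insert _ _

theorem box_mono : Monotone C.box := fun _ _ h =>
  intBox_mono (C.A_mono h) (Finset.card_le_card (C.A_mono h))

theorem m_mem {i n : ℕ} (h : i < n) : C.m i ∈ (C.q n).A :=
  C.A_mono h (show C.m i ∈ (C.q (i + 1)).A from C.A_succ i ▸ Finset.mem_insert_self _ _)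

theorem m_strictMono : StrictMono C.m :=
  strictMono_nat_of_lt_succ fun n => C.lt_m (n + 1) _ (C.m_mem (Nat.lt_succ_self n))

theorem near_stable {n n' : ℕ} (h : n ≤ n') {c : ℕ →₀ ℤ} (hc : c ∈ C.box n) :
    nearPoint hD ((C.q n').phi (toC0 c)) = nearPoint hD ((C.q n).phi (toC0 c)) := by
  induction n', h using Nat.le_induction with
  | base => rfl
  | succ n' hn ih => rw [C.near_succ n' c (C.box_mono hn hc), ih]

theorem profile_stable {n n' : ℕ} (h : n ≤ n') {j : ℕ} (hj : j ≤ (C.q n).A.card) :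
    modulusProfile (C.q n').kappa (C.q n').omega j =
      modulusProfile (C.q n).kappa (C.q n).omega j := by
  induction n', h using Nat.le_induction with
  | base => rfl
  | succ n' hn ih =>
    rw [C.profile_succ n' j (hj.trans (Finset.card_le_card (C.A_mono hn))), ih]

/-- Junk unless `c` lies in some box. -/
def limit (c : ℕ →₀ ℤ) : E := nearPoint hD ((C.q (sInf {n | c ∈ C.box n})).phi (toC0 c))

theorem dist_limit_lt {n : ℕ} {c : ℕ →₀ ℤ} (hc : c ∈ C.box n) :
    dist ((C.q n).phi (toC0 c)) (C.limit c) < 1 := by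
  have hN : sInf {n | c ∈ C.box n} ∈ {n | c ∈ C.box n} := Nat.sInf_mem ⟨n, hc⟩
  rw [limit, ← C.near_stable (le_max_left _ n) hN, C.near_stable (le_max_right _ n) hc]
  exact dist_nearPoint_lt hD _

theorem abs_dist_limit_sub_lt {n : ℕ} {c c' : ℕ →₀ ℤ} (hc : c ∈ C.box n) (hc' : c' ∈ C.box n) :
    |dist (C.limit c) (C.limit c') - dist ((C.q n).phi (toC0 c)) ((C.q n).phi (toC0 c'))| < 2 := by
  rw [← Real.dist_eq]
  refine (dist_dist_dist_le _ _ _ _).trans_lt ?_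
  rw [dist_comm (C.limit c), dist_comm (C.limit c')]
  linarith [C.dist_limit_lt hc, C.dist_limit_lt hc']

def omegaLimit (j : ℕ) : ℕ := omegaCeil (C.q j).omega j

def thresholdLimit (M : ℕ) : ℕ := kappaThreshold (C.q M).kappa M

theorem dist_limit_le {N : ℕ} {c c' : ℕ →₀ ℤ} (hc : c ∈ C.box N) (hc' : c' ∈ C.box N)
    (hne : c ≠ c') :
    dist (C.limit c) (C.limit c') ≤ C.omegaLimit ⌈dist (toC0 c) (toC0 c')⌉₊ + 2 := by
  set j := ⌈dist (toC0 c) (toC0 c')⌉₊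
  have hc := C.box_mono (le_max_left N j) hc
  have hc' := C.box_mono (le_max_left N j) hc'
  have hphi := dist_phi_le_omegaCeil (C.mem _) (mem_intBox.1 hc).1 (mem_intBox.1 hc').1 hne
  have hstable := congrArg Prod.fst (C.profile_stable (le_max_right N j) (C.le_card j))
  have hlim := C.abs_dist_limit_sub_lt hc hc'
  simp only [modulusProfile] at hstable
  rw [hstable] at hphi
  rw [abs_lt] at hlim
  unfold omegaLimit
  linarith

theorem le_dist_limit {N : ℕ} {c c' : ℕ →₀ ℤ} (hc : c ∈ C.box N) (hc' : c' ∈ C.box N)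
    (hne : c ≠ c') {M : ℕ} (hM : C.thresholdLimit M ≤ ⌊dist (toC0 c) (toC0 c')⌋₊) :
    (M : ℝ) ≤ dist (C.limit c) (C.limit c') + 2 := by
  have hc := C.box_mono (le_max_left N M) hc
  have hc' := C.box_mono (le_max_left N M) hc'
  have hstable := congrArg Prod.snd (C.profile_stable (le_max_right N M) (C.le_card M))
  simp only [modulusProfile] at hstable
  have hphi := le_dist_phi_of_kappaThreshold_le (C.mem _) (mem_intBox.1 hc).1
    (mem_intBox.1 hc').1 hne (M := M) (by rwa [hstable])
  have hlim := C.abs_dist_limit_sub_lt hc hc'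
  rw [abs_lt] at hlim
  linarith

theorem exists_mem_box (x : c0) : ∃ n, roundAlong C.m x ∈ C.box n := by
  set f := roundFinsupp x
  set n := f.support.sup (fun i => i + (f i).natAbs) + 1
  have hbound : ∀ i, i ∈ f.support → i + (f i).natAbs < n := fun i hi =>
    Nat.lt_succ_of_le (Finset.le_sup (f := fun i => i + (f i).natAbs) hi)
  refine ⟨n, mem_intBox.2 ⟨fun l hl => ?_, fun l _ => ?_⟩⟩
  · obtain ⟨i, hi, rfl⟩ := Finset.mem_image.1 (Finsupp.mapDomain_support hl)
    exact C.m_mem (by have := hbound i hi; omega)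
  · by_cases hl : l ∈ range C.m
    · obtain ⟨i, rfl⟩ := hl
      rw [roundAlong, Finsupp.mapDomain_apply C.m_strictMono.injective, Int.abs_eq_natAbs]
      have := C.le_card n
      by_cases hi : i ∈ f.support
      · have := hbound i hi
        exact_mod_cast (by omega : (f i).natAbs ≤ (C.q n).A.card)
      · change ((f i).natAbs : ℤ) ≤ _
        simp [Finsupp.notMem_support_iff.1 hi]
    · simp [roundAlong_apply_of_notMem_range x hl]

theorem exists_mem_box₂ (x y : c0) :
    ∃ N, roundAlong C.m x ∈ C.box N ∧ roundAlong C.m y ∈ C.box N := by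
  obtain ⟨n, hn⟩ := C.exists_mem_box x
  obtain ⟨n', hn'⟩ := C.exists_mem_box y
  exact ⟨max n n', C.box_mono (le_max_left _ _) hn, C.box_mono (le_max_right _ _) hn'⟩

def embedding (x : c0) : E := C.limit (roundAlong C.m x)

/-- The `+ 2` keeps the rounded points apart, the `- 2` absorbs two approximation errors `< 1`. -/
def lowerControl (t : ℝ) : ℝ :=
  max ((Nat.findGreatest (fun M => (C.thresholdLimit M : ℝ) + 2 ≤ t) ⌊t⌋₊ : ℝ) - 2) 0

def upperControl (t : ℝ) : ℝ := (((Finset.range (⌈t⌉₊ + 2)).sup C.omegaLimit : ℕ) : ℝ) + 2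

theorem monotone_lowerControl : Monotone C.lowerControl := fun a b hab => by
  refine max_le_max (sub_le_sub_right ?_ 2) le_rfl
  exact_mod_cast Nat.findGreatest_mono
    (fun M (hM : (C.thresholdLimit M : ℝ) + 2 ≤ a) => hM.trans hab) (Nat.floor_mono hab)

theorem tendsto_lowerControl : Tendsto C.lowerControl atTop atTop := by
  refine tendsto_atTop_atTop.2 fun b => ⟨⌈b⌉₊ + 2 + C.thresholdLimit (⌈b⌉₊ + 2), fun t ht => ?_⟩
  have hM : ⌈b⌉₊ + 2 ≤ Nat.findGreatest (fun M => (C.thresholdLimit M : ℝ) + 2 ≤ t) ⌊t⌋₊ :=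
    Nat.le_findGreatest (Nat.le_floor (by push_cast at ht ⊢; linarith))
      (by linarith)
  have hM' := (Nat.cast_le (α := ℝ)).2 hM
  push_cast at hM'
  exact le_trans (by linarith [Nat.le_ceil b]) (le_max_left _ _)

theorem monotone_upperControl : Monotone C.upperControl := fun a b hab => by
  unfold upperControl
  gcongr

theorem lowerControl_le (x y : c0) :
    C.lowerControl (dist x y) ≤ dist (C.embedding x) (C.embedding y) := by
  unfold lowerControl
  set M := Nat.findGreatest (fun M => (C.thresholdLimit M : ℝ) + 2 ≤ dist x y) ⌊dist x y⌋₊ with hM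
  refine max_le ?_ dist_nonneg
  rcases eq_or_ne M 0 with hM0 | hM0
  · rw [hM0, Nat.cast_zero]
    linarith [dist_nonneg (x := C.embedding x) (y := C.embedding y)]
  have hP : (C.thresholdLimit M : ℝ) + 2 ≤ dist x y := Nat.findGreatest_of_ne_zero hM.symm hM0
  obtain ⟨N, hx, hy⟩ := C.exists_mem_box₂ x y
  have hD := dist_le_dist_toC0_roundAlong C.m_strictMono.injective x y
  have hne : roundAlong C.m x ≠ roundAlong C.m y := fun h => by
    rw [h, dist_self] at hD
    linarith [(C.thresholdLimit M).cast_nonneg (α := ℝ)]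
  have := C.le_dist_limit hx hy hne (M := M) (Nat.le_floor (by linarith))
  unfold embedding
  linarith

theorem dist_le_upperControl (x y : c0) :
    dist (C.embedding x) (C.embedding y) ≤ C.upperControl (dist x y) := by
  unfold embedding upperControl
  by_cases heq : roundAlong C.m x = roundAlong C.m y
  · rw [heq, dist_self]
    positivity
  obtain ⟨N, hx, hy⟩ := C.exists_mem_box₂ x y
  have hD := dist_toC0_roundAlong_le C.m_strictMono.injective x y
  have hj : ⌈dist (toC0 (roundAlong C.m x)) (toC0 (roundAlong C.m y))⌉₊ ∈
      Finset.range (⌈dist x y⌉₊ + 2) := by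
    have := Nat.ceil_mono hD
    rw [Nat.ceil_add_one dist_nonneg] at this
    exact Finset.mem_range.2 (by omega)
  have hsup := (Nat.cast_le (α := ℝ)).2 (Finset.le_sup (f := C.omegaLimit) hj)
  linarith [C.dist_limit_le hx hy heq]

theorem coarseEmbeddingMap_embedding : CoarseEmbeddingMap C.embedding :=
  ⟨C.lowerControl, C.upperControl, C.monotone_lowerControl.monotoneOn _,
    C.monotone_upperControl.monotoneOn _,
    fun _ _ => ⟨le_max_right _ _, by unfold upperControl; positivity⟩,
    C.tendsto_lowerControl, fun x y => ⟨C.lowerControl_le x y, C.dist_le_upperControl x y⟩⟩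

end ApproxChain

end Chain

end

end C0Embedding

theorem stmt15_general {E : Type*} [MetricSpace E]
    [TopologicalSpace.SeparableSpace E] :
    (∃ f : c0 → E, CoarseEmbeddingMap f) ∨
      ∃ hwf : WellFounded fun p q : ↥(CoaTheta (E := E) ZR stdBasis) =>
          QuadFRel ZR stdBasis p.1 q.1,
        relRankOn (QuadFRel ZR stdBasis) (CoaTheta (E := E) ZR stdBasis) hwf
          < (Cardinal.aleph 1).ord := by
  by_cases hemb : ∃ f : c0 → E, CoarseEmbeddingMap f
  · exact Or.inl hemb
  right
  obtain ⟨D, hDc, hD⟩ := TopologicalSpace.exists_countable_dense E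
  have := hDc.to_subtype
  refine exists_relRankOn_lt_of_map (s := C0Embedding.CodeRel hD) ?_
    (fun p => C0Embedding.code hD p.1)
    fun p q h => ⟨p.1, q.1, p.2, q.2, h, rfl, rfl⟩
  refine wellFounded_iff_isEmpty_descending_chain.2 ⟨fun ⟨b, hb⟩ => hemb ?_⟩
  obtain ⟨C⟩ := C0Embedding.nonempty_approxChain_of_descending hb
  exact ⟨C.embedding, C.coarseEmbeddingMap_embedding⟩

theorem stmt15 {E : Type*} [MetricSpace E]
    [TopologicalSpace.SeparableSpace E] [CompleteSpace E] :
    (∃ f : c0 → E, CoarseEmbeddingMap f) ∨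
      ∃ hwf : WellFounded fun p q : ↥(CoaTheta (E := E) ZR stdBasis) =>
          QuadFRel ZR stdBasis p.1 q.1,
        relRankOn (QuadFRel ZR stdBasis) (CoaTheta (E := E) ZR stdBasis) hwf
          < (Cardinal.aleph 1).ord :=
  stmt15_general
end

section
/- Assume that every family F ⊆ ℕ^ℕ of cardinality at most ℵ₁ is bounded with respect to eventual domination (i.e., 𝔟 > ℵ₁). Let I be an uncountable set and let {g_i}_{i∈I} and {f_i}_{i∈I} be families of non-decreasing functions g_i, f_i : ℕ → ℕ satisfying lim_{n→∞} g_i(n) = lim_{n→∞} f_i(n) = ∞. Then there exist non-decreasing functions f, g : ℕ → ℕ with lim_{n→∞} g(n) = lim_{n→∞} f(n) = ∞ and an uncountable subset J ⊆ I such that g(n) ≤ g_i(n) and f_i(n) ≤ f(n) for all n ∈ ℕ and all i ∈ J. -/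
open Filter Set Topology
open scoped ENNReal

/-!
Let `a i k` be a point where `g i` reaches `k` and put `p i = max (f i) (a i)`. By `𝔟 > ℵ₁` some
`ℵ₁`-sized subfamily of the `p i` is eventually dominated by one `h`, so `p i ≤ max h N i`
everywhere for some `N i : ℕ`; pigeonholing on `N i` leaves uncountably many `i` bounded by a
single `b`. A monotone majorant `F ≥ b` then bounds these `f i`, and since `k ≤ g i (F k)`, the
lower inverse `G` of `F` lies below these `g i`.
-/

theorem Set.exists_not_countable_inter_preimage_singleton {α β : Type*} [Countable β]
    {s : Set α} (hs : ¬ s.Countable) (f : α → β) : ∃ b, ¬ (s ∩ f ⁻¹' {b}).Countable := by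
  by_contra! h
  refine hs ((countable_iUnion h).mono fun a ha => ?_)
  exact mem_iUnion.2 ⟨f a, ha, rfl⟩

theorem exists_le_max_of_eventually_lt {f h : ℕ → ℕ} (hfh : ∀ᶠ n in atTop, f n < h n) :
    ∃ N, ∀ n, f n ≤ max (h n) N := by
  obtain ⟨m, hm⟩ := eventually_atTop.1 hfh
  refine ⟨(Finset.range m).sup f, fun n => ?_⟩
  rcases lt_or_ge n m with hn | hn
  · exact le_max_of_le_right (Finset.le_sup (Finset.mem_range.2 hn))
  · exact le_max_of_le_left (hm n hn).le

theorem EvDomBounded.exists_not_countable_forall_le {I : Type*} {S : Set I} (hS : ¬ S.Countable)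
    {p : I → ℕ → ℕ} (hp : EvDomBounded (p '' S)) :
    ∃ J : Set I, ¬ J.Countable ∧ ∃ b : ℕ → ℕ, ∀ i ∈ J, ∀ n, p i n ≤ b n := by
  obtain ⟨h, hh⟩ := hp
  choose! N hN using fun i (hi : i ∈ S) => exists_le_max_of_eventually_lt (hh _ ⟨i, hi, rfl⟩)
  obtain ⟨M, hM⟩ := exists_not_countable_inter_preimage_singleton hS N
  refine ⟨_, hM, fun n => max (h n) M, fun i ⟨hiS, hiM⟩ n => ?_⟩
  rw [← hiM]
  exact hN i hiS n

theorem exists_not_countable_evDomBounded_image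
    (hb : ∀ F : Set (ℕ → ℕ), Cardinal.mk F ≤ Cardinal.aleph 1 → EvDomBounded F)
    {I : Type*} (hI : ¬ (univ : Set I).Countable) (p : I → ℕ → ℕ) :
    ∃ S : Set I, ¬ S.Countable ∧ EvDomBounded (p '' S) := by
  have hI' : Cardinal.aleph 1 ≤ Cardinal.mk I := by
    simpa [Cardinal.aleph_one_le_iff, ← Cardinal.le_aleph0_iff_set_countable] using hI
  obtain ⟨S, hS⟩ := Cardinal.le_mk_iff_exists_set.1 hI'
  refine ⟨S, by simp [← Cardinal.le_aleph0_iff_set_countable, hS], hb _ ?_⟩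
  simpa [hS] using Cardinal.mk_image_le_lift (f := p) (s := S)

theorem exists_monotone_tendsto_atTop_ge (b : ℕ → ℕ) :
    ∃ B : ℕ → ℕ, Monotone B ∧ Tendsto B atTop atTop ∧ b ≤ B := by
  let B := partialSups fun n => max n (b n)
  have hB : ∀ n, max n (b n) ≤ B n := le_partialSups _
  exact ⟨B, B.monotone, tendsto_atTop_mono (fun n => le_of_max_le_left (hB n)) tendsto_id,
    fun n => le_of_max_le_right (hB n)⟩

/-- `G n` is the largest `k ≤ n` with `B k ≤ n`, so `G n ≤ g (B (G n)) ≤ g n`. -/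
theorem exists_monotone_tendsto_atTop_le_of_le_comp (B : ℕ → ℕ) :
    ∃ G : ℕ → ℕ, Monotone G ∧ Tendsto G atTop atTop ∧
      ∀ g : ℕ → ℕ, Monotone g → (∀ k, k ≤ g (B k)) → G ≤ g := by
  let G n := Nat.findGreatest (fun k => B k ≤ n) n
  refine ⟨G, fun a b hab => Nat.findGreatest_mono (fun k hk => hk.trans hab) hab, ?_, ?_⟩
  · exact tendsto_atTop_atTop.2 fun k => ⟨max k (B k), fun n hn =>
      Nat.le_findGreatest (le_of_max_le_left hn) (le_of_max_le_right hn)⟩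
  · intro g hg hBg n
    rcases eq_or_ne (G n) 0 with h0 | h0
    · exact h0 ▸ Nat.zero_le _
    · calc G n ≤ g (B (G n)) := hBg _
        _ ≤ g n := hg ((Nat.findGreatest_eq_iff.1 rfl).2.1 h0)

theorem stmt17_general (hb : ∀ F : Set (ℕ → ℕ), Cardinal.mk F ≤ Cardinal.aleph 1 → EvDomBounded F)
    {I : Type*} (hI : ¬ (Set.univ : Set I).Countable)
    (g f : I → ℕ → ℕ) (hgmono : ∀ i, Monotone (g i))
    (hg : ∀ i, Filter.Tendsto (g i) Filter.atTop Filter.atTop) :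
    ∃ G F : ℕ → ℕ, Monotone G ∧ Monotone F ∧
      Filter.Tendsto G Filter.atTop Filter.atTop ∧
      Filter.Tendsto F Filter.atTop Filter.atTop ∧
      ∃ J : Set I, ¬ J.Countable ∧ ∀ i ∈ J, ∀ n : ℕ, G n ≤ g i n ∧ f i n ≤ F n := by
  choose a ha using fun i k => ((hg i).eventually_ge_atTop k).exists
  obtain ⟨S, hS, hbdd⟩ :=
    exists_not_countable_evDomBounded_image hb hI fun i n => max (f i n) (a i n)
  obtain ⟨J, hJ, b, hfab⟩ := hbdd.exists_not_countable_forall_le hS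
  obtain ⟨F, hFmono, hFtend, hbF⟩ := exists_monotone_tendsto_atTop_ge b
  obtain ⟨G, hGmono, hGtend, hGle⟩ := exists_monotone_tendsto_atTop_le_of_le_comp F
  refine ⟨G, F, hGmono, hFmono, hGtend, hFtend, J, hJ, fun i hi n => ⟨?_, ?_⟩⟩
  · refine hGle (g i) (hgmono i) (fun k => (ha i k).trans (hgmono i ?_)) n
    exact (le_max_right _ _).trans ((hfab i hi k).trans (hbF k))
  · exact (le_max_left _ _).trans ((hfab i hi n).trans (hbF n))

theorem stmt17 (hb : ∀ F : Set (ℕ → ℕ), Cardinal.mk F ≤ Cardinal.aleph 1 → EvDomBounded F)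
    {I : Type*} (hI : ¬ (Set.univ : Set I).Countable)
    (g f : I → ℕ → ℕ) (hgmono : ∀ i, Monotone (g i)) (hfmono : ∀ i, Monotone (f i))
    (hg : ∀ i, Filter.Tendsto (g i) Filter.atTop Filter.atTop)
    (hf : ∀ i, Filter.Tendsto (f i) Filter.atTop Filter.atTop) :
    ∃ G F : ℕ → ℕ, Monotone G ∧ Monotone F ∧
      Filter.Tendsto G Filter.atTop Filter.atTop ∧
      Filter.Tendsto F Filter.atTop Filter.atTop ∧
      ∃ J : Set I, ¬ J.Countable ∧ ∀ i ∈ J, ∀ n : ℕ, G n ≤ g i n ∧ f i n ≤ F n :=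
  stmt17_general hb hI g f hgmono hg
end
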